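/- arXiv:2204.06796 — 5 statements merged into one kernel-verified Lean document; each statement's English description precedes it below -/
import Mathlib

section
/- For every function f : [0,∞) → ℝ that is twice continuously differentiable and has compact support, there exists a sequence (f_n) of finite linear combinations of the functions x ↦ e^{−λx} with λ ≥ 0 such that f_n → f, f_n′ → f′ and f_n″ → f″ uniformly on [0,∞) as n → ∞. -/
/-!
Substituting `t = e^{-x}` turns `f` into `g t = f (-log t)`, which is `C²` on `[0, 1]` because `f`
vanishes near `∞`, so `g` vanishes near `0`. Approximate `g''` uniformly by a polynomial
(Weierstrass) and integrate twice with the right initial values: the mean value inequality gives a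
polynomial `P = ∑ aᵢ Xⁱ` with `P, P', P''` uniformly close to `g, g', g''` on `[0, 1]`. Then
`P (e^{-x}) = ∑ aᵢ e^{-ix}`, and by the chain rule its first two derivatives differ from those of
`f` by the errors in `g', g''` multiplied by `e^{-x}, e^{-2x} ≤ 1`.
-/
open Filter Set Polynomial Real Topology

theorem tendstoUniformlyOn_of_dist_le {ι α β : Type*} [PseudoMetricSpace β] {l : Filter ι}
    {F : ι → α → β} {f : α → β} {s : Set α} {u : ι → ℝ} (hu : Tendsto u l (𝓝 0))
    (h : ∀ n, ∀ x ∈ s, dist (f x) (F n x) ≤ u n) : TendstoUniformlyOn F f l s := by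
  rw [Metric.tendstoUniformlyOn_iff]
  intro ε hε
  filter_upwards [hu.eventually (gt_mem_nhds hε)] with n hn x hx
  exact (h n x hx).trans_lt hn

theorem Polynomial.exists_derivative_eq {K : Type*} [Field K] [CharZero K] (p : K[X]) :
    ∃ P : K[X], derivative P = p := by
  refine ⟨p.sum fun n a => C (a / (n + 1)) * X ^ (n + 1), ?_⟩
  conv_rhs => rw [← p.sum_C_mul_X_pow_eq]
  rw [Polynomial.sum, Polynomial.sum, map_sum]
  refine Finset.sum_congr rfl fun n _ => ?_
  rw [derivative_C_mul_X_pow, Nat.add_sub_cancel]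
  congr 2
  push_cast
  field_simp

theorem exists_derivative_eq_abs_sub_le {h h' : ℝ → ℝ} {a b ε : ℝ}
    (hh : ∀ x ∈ Icc a b, HasDerivWithinAt h (h' x) (Icc a b) x) (p : ℝ[X])
    (hp : ∀ x ∈ Icc a b, |h' x - p.eval x| ≤ ε) :
    ∃ P : ℝ[X], derivative P = p ∧ ∀ x ∈ Icc a b, |h x - P.eval x| ≤ ε * (x - a) := by
  obtain ⟨Q, hQ⟩ := p.exists_derivative_eq
  set P := Q + C (h a - Q.eval a)
  have hPa : P.eval a = h a := by simp [P]
  have hP : derivative P = p := by simp [P, hQ]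
  have hdiff : ∀ x ∈ Icc a b,
      HasDerivWithinAt (fun y => h y - P.eval y) (h' x - p.eval x) (Icc a b) x := fun x hx => by
    simpa [hP] using (hh x hx).fun_sub (P.hasDerivAt x).hasDerivWithinAt
  refine ⟨P, hP, fun x hx => ?_⟩
  simpa [hPa] using norm_image_sub_le_of_norm_deriv_le_segment' hdiff
    (fun y hy => hp y (Ico_subset_Icc_self hy)) x hx

theorem exists_polynomial_near_of_contDiffOn_two {g : ℝ → ℝ} {a b : ℝ} (hab : a < b)
    (hg : ContDiffOn ℝ 2 g (Icc a b)) {ε : ℝ} (hε : 0 < ε) :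
    ∃ P : ℝ[X], ∀ x ∈ Icc a b, |g x - P.eval x| ≤ ε ∧
      |derivWithin g (Icc a b) x - (derivative P).eval x| ≤ ε ∧
      |derivWithin (derivWithin g (Icc a b)) (Icc a b) x - (derivative (derivative P)).eval x|
        ≤ ε := by
  have hu := uniqueDiffOn_Icc hab
  have hg₁ : ContDiffOn ℝ 1 (derivWithin g (Icc a b)) (Icc a b) := hg.derivWithin hu (by norm_num)
  set L := b - a
  set δ := ε / (1 + L) ^ 2
  have hL : 0 ≤ L := by simp only [L]; linarith
  have hδ : 0 < δ := by positivity
  have hδL : δ * (1 + L) ^ 2 = ε := div_mul_cancel₀ ε (by positivity)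
  obtain ⟨q, hq⟩ := exists_polynomial_near_of_continuousOn a b _
    (hg₁.continuousOn_derivWithin hu le_rfl) δ hδ
  obtain ⟨Q, rfl, hQ⟩ := exists_derivative_eq_abs_sub_le
    (fun x hx => (hg₁.differentiableOn one_ne_zero x hx).hasDerivWithinAt) q
    (fun x hx => by rw [abs_sub_comm]; exact (hq x hx).le)
  have hQ' : ∀ x ∈ Icc a b, |derivWithin g (Icc a b) x - Q.eval x| ≤ δ * L := fun x hx =>
    (hQ x hx).trans (mul_le_mul_of_nonneg_left (by simp only [L]; linarith [hx.2]) hδ.le)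
  obtain ⟨P, rfl, hP⟩ := exists_derivative_eq_abs_sub_le
    (fun x hx => (hg.differentiableOn two_ne_zero x hx).hasDerivWithinAt) Q hQ'
  have hsq : 1 ≤ (1 + L) ^ 2 ∧ L ≤ (1 + L) ^ 2 ∧ L * L ≤ (1 + L) ^ 2 := by
    refine ⟨?_, ?_, ?_⟩ <;> nlinarith
  refine ⟨P, fun x hx => ⟨(hP x hx).trans ?_, (hQ' x hx).trans ?_, ?_⟩⟩
  · calc δ * L * (x - a) ≤ δ * L * L := by gcongr; simp only [L]; linarith [hx.2]
      _ ≤ ε := by rw [← hδL, mul_assoc]; gcongr; exact hsq.2.2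
  · rw [← hδL]; gcongr; exact hsq.2.1
  · rw [abs_sub_comm, ← hδL]
    exact (hq x hx).le.trans (le_mul_of_one_le_right hδ.le hsq.1)

noncomputable def expSum (P : ℝ[X]) (k : ℕ) (x : ℝ) : ℝ :=
  ∑ i ∈ Finset.range (P.natDegree + 1), P.coeff i * (-(i : ℝ)) ^ k * exp (-(i : ℝ) * x)

theorem expSum_zero (P : ℝ[X]) (x : ℝ) : expSum P 0 x = P.eval (exp (-x)) := by
  simp only [expSum, pow_zero, mul_one, eval_eq_sum_range, ← exp_nat_mul]
  refine Finset.sum_congr rfl fun i _ => ?_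
  ring_nf

theorem hasDerivAt_expSum (P : ℝ[X]) (k : ℕ) (x : ℝ) :
    HasDerivAt (expSum P k) (expSum P (k + 1) x) x := by
  refine HasDerivAt.fun_sum fun i _ => ?_
  exact ((((hasDerivAt_id x).const_mul (-(i : ℝ))).exp).const_mul
    (P.coeff i * (-(i : ℝ)) ^ k)).congr_deriv (by simp only [id]; ring)

theorem derivWithin_expSum (P : ℝ[X]) (k : ℕ) :
    EqOn (derivWithin (expSum P k) (Ici 0)) (expSum P (k + 1)) (Ici 0) := fun x hx =>
  (hasDerivAt_expSum P k x).hasDerivWithinAt.derivWithin (uniqueDiffOn_Ici 0 x hx)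

theorem mapsTo_exp_neg_Ici : MapsTo (fun x => exp (-x)) (Ici 0) (Icc 0 1) := fun _ hx =>
  ⟨(exp_pos _).le, exp_le_one_iff.2 (neg_nonpos.2 hx)⟩

section CompExpNeg

variable {F h h₁ h₂ : ℝ → ℝ}

theorem hasDerivWithinAt_comp_exp_neg
    (hh : ∀ t ∈ Icc 0 1, HasDerivWithinAt h (h₁ t) (Icc 0 1) t) {x : ℝ} (hx : x ∈ Ici 0) :
    HasDerivWithinAt (fun y => h (exp (-y))) (-exp (-x) * h₁ (exp (-x))) (Ici 0) x :=
  ((hh _ (mapsTo_exp_neg_Ici hx)).comp x (hasDerivAt_neg x).exp.hasDerivWithinAt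
    mapsTo_exp_neg_Ici).congr_deriv (by dsimp only; ring)

theorem derivWithin_comp_exp_neg (hF : EqOn F (fun y => h (exp (-y))) (Ici 0))
    (hh : ∀ t ∈ Icc 0 1, HasDerivWithinAt h (h₁ t) (Icc 0 1) t) :
    EqOn (derivWithin F (Ici 0)) (fun x => -exp (-x) * h₁ (exp (-x))) (Ici 0) := fun x hx =>
  ((hasDerivWithinAt_comp_exp_neg hh hx).congr hF (hF hx)).derivWithin (uniqueDiffOn_Ici 0 x hx)

theorem derivWithin_derivWithin_comp_exp_neg (hF : EqOn F (fun y => h (exp (-y))) (Ici 0))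
    (hh : ∀ t ∈ Icc 0 1, HasDerivWithinAt h (h₁ t) (Icc 0 1) t)
    (hh₁ : ∀ t ∈ Icc 0 1, HasDerivWithinAt h₁ (h₂ t) (Icc 0 1) t) :
    EqOn (derivWithin (derivWithin F (Ici 0)) (Ici 0))
      (fun x => exp (-x) * h₁ (exp (-x)) + exp (-x) ^ 2 * h₂ (exp (-x))) (Ici 0) := by
  intro x hx
  rw [derivWithin_comp_exp_neg (derivWithin_comp_exp_neg hF hh)
    (fun t ht => (hasDerivWithinAt_neg t _).mul (hh₁ t ht)) hx]
  ring

end CompExpNeg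

theorem abs_sub_expSum_le {f g : ℝ → ℝ} (hfg : EqOn f (fun x => g (exp (-x))) (Ici 0))
    (hg : ContDiffOn ℝ 2 g (Icc 0 1)) {P : ℝ[X]} {ε : ℝ}
    (hP : ∀ t ∈ Icc (0 : ℝ) 1, |g t - P.eval t| ≤ ε ∧
      |derivWithin g (Icc 0 1) t - (derivative P).eval t| ≤ ε ∧
      |derivWithin (derivWithin g (Icc 0 1)) (Icc 0 1) t - (derivative (derivative P)).eval t|
        ≤ ε)
    {x : ℝ} (hx : x ∈ Ici 0) :
    |f x - expSum P 0 x| ≤ ε ∧ |derivWithin f (Ici 0) x - expSum P 1 x| ≤ ε ∧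
      |derivWithin (derivWithin f (Ici 0)) (Ici 0) x - expSum P 2 x| ≤ 2 * ε := by
  have hu : UniqueDiffOn ℝ (Icc (0 : ℝ) 1) := uniqueDiffOn_Icc zero_lt_one
  have hg₁ : ContDiffOn ℝ 1 (derivWithin g (Icc 0 1)) (Icc 0 1) := hg.derivWithin hu (by norm_num)
  have hgd : ∀ t ∈ Icc (0 : ℝ) 1, HasDerivWithinAt g (derivWithin g (Icc 0 1) t) (Icc 0 1) t :=
    fun t ht => (hg.differentiableOn two_ne_zero t ht).hasDerivWithinAt
  have hgdd : ∀ t ∈ Icc (0 : ℝ) 1, HasDerivWithinAt (derivWithin g (Icc 0 1))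
      (derivWithin (derivWithin g (Icc 0 1)) (Icc 0 1) t) (Icc 0 1) t :=
    fun t ht => (hg₁.differentiableOn one_ne_zero t ht).hasDerivWithinAt
  have hPd : ∀ (Q : ℝ[X]), ∀ t ∈ Icc (0 : ℝ) 1,
      HasDerivWithinAt (fun s => Q.eval s) ((derivative Q).eval t) (Icc 0 1) t :=
    fun Q t _ => (Q.hasDerivAt t).hasDerivWithinAt
  have hE : EqOn (expSum P 0) (fun y => P.eval (exp (-y))) (Ici 0) := fun y _ => expSum_zero P y
  have hE1 : expSum P 1 x = -exp (-x) * (derivative P).eval (exp (-x)) :=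
    (derivWithin_expSum P 0 hx).symm.trans (derivWithin_comp_exp_neg hE (hPd P) hx)
  have hE2 : expSum P 2 x = exp (-x) * (derivative P).eval (exp (-x)) +
      exp (-x) ^ 2 * (derivative (derivative P)).eval (exp (-x)) := by
    rw [← derivWithin_expSum P 1 hx, ← derivWithin_congr (derivWithin_expSum P 0)
      (derivWithin_expSum P 0 hx)]
    exact derivWithin_derivWithin_comp_exp_neg hE (hPd P) (hPd _) hx
  rw [hfg hx, expSum_zero, hE1, hE2, derivWithin_comp_exp_neg hfg hgd hx,
    derivWithin_derivWithin_comp_exp_neg hfg hgd hgdd hx]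
  dsimp only
  set t := exp (-x)
  obtain ⟨ht₀, ht₁⟩ : t ∈ Icc 0 1 := mapsTo_exp_neg_Ici hx
  obtain ⟨h₀, h₁, h₂⟩ := hP t ⟨ht₀, ht₁⟩
  have hmul : ∀ {s a : ℝ}, 0 ≤ s → s ≤ 1 → |a| ≤ ε → |s * a| ≤ ε := fun hs₀ hs₁ ha => by
    rw [abs_mul, abs_of_nonneg hs₀]
    exact (mul_le_of_le_one_left (abs_nonneg _) hs₁).trans ha
  refine ⟨h₀, ?_, ?_⟩
  · rw [← mul_sub, abs_mul, abs_neg, ← abs_mul]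
    exact hmul ht₀ ht₁ h₁
  · rw [add_sub_add_comm, ← mul_sub, ← mul_sub, two_mul]
    exact (abs_add_le _ _).trans (add_le_add (hmul ht₀ ht₁ h₁)
      (hmul (by positivity) (pow_le_one₀ ht₀ ht₁) h₂))

/-- The value `0` for `t ≤ 0`, rather than the junk `f (-log 0) = f 0` at `t = 0`, makes
`compNegLog f` vanish near `0` when `f` vanishes near `∞`. -/
noncomputable def compNegLog (f : ℝ → ℝ) (t : ℝ) : ℝ := if 0 < t then f (-Real.log t) else 0

theorem compNegLog_exp_neg (f : ℝ → ℝ) (x : ℝ) : compNegLog f (exp (-x)) = f x := by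
  simp [compNegLog, exp_pos]

theorem contDiffOn_compNegLog {f : ℝ → ℝ} {n : WithTop ℕ∞} {M : ℝ}
    (hf : ContDiffOn ℝ n f (Ici 0)) (hM : ∀ x, M ≤ x → f x = 0) :
    ContDiffOn ℝ n (compNegLog f) (Icc 0 1) := by
  refine contDiffOn_of_locally_contDiffOn fun t ht => ?_
  rcases lt_or_ge t (exp (-M)) with htM | htM
  · refine ⟨Iio (exp (-M)), isOpen_Iio, htM,
      (contDiffOn_const (c := (0 : ℝ))).congr fun s hs => ?_⟩
    unfold compNegLog
    split_ifs with hs₀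
    · refine hM _ ?_
      have := Real.log_lt_log hs₀ hs.2
      rw [Real.log_exp] at this
      linarith
    · rfl
  · have ht₀ : 0 < t := (exp_pos _).trans_le htM
    refine ⟨Ioi 0, isOpen_Ioi, ht₀, ?_⟩
    have hlog : ContDiffOn ℝ n (fun s => -Real.log s) (Icc 0 1 ∩ Ioi 0) :=
      (Real.contDiffOn_log.mono fun s hs => ne_of_gt hs.2).neg
    refine (hf.comp hlog fun s hs => ?_).congr fun s hs => by
      simp [compNegLog, show 0 < s from hs.2]
    exact neg_nonneg.2 (Real.log_nonpos hs.2.le hs.1.2)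

/-- every `f ∈ C_c²([0,∞))` can be approximated, together with its first and
second (one-sided) derivatives, uniformly on `[0,∞)` by finite linear combinations of the
exponentials `x ↦ e^{−λx}`, `λ ≥ 0`. -/
theorem stmt2 (f : ℝ → ℝ)
    (hf : ContDiffOn ℝ 2 f (Ici 0))
    (hsupp : ∃ M : ℝ, ∀ x, M ≤ x → f x = 0) :
    ∃ (N : ℕ → ℕ) (coef lam : ℕ → ℕ → ℝ),
      (∀ n i, 0 ≤ lam n i) ∧
      TendstoUniformlyOn
        (fun n x => ∑ i ∈ Finset.range (N n), coef n i * Real.exp (-(lam n i) * x))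
        f atTop (Ici 0) ∧
      TendstoUniformlyOn
        (fun n x => ∑ i ∈ Finset.range (N n),
          coef n i * (-(lam n i)) * Real.exp (-(lam n i) * x))
        (fun x => derivWithin f (Ici 0) x) atTop (Ici 0) ∧
      TendstoUniformlyOn
        (fun n x => ∑ i ∈ Finset.range (N n),
          coef n i * (lam n i) ^ 2 * Real.exp (-(lam n i) * x))
        (fun x => derivWithin (fun y => derivWithin f (Ici 0) y) (Ici 0) x)
        atTop (Ici 0) := by
  obtain ⟨M, hM⟩ := hsupp
  have hfg : EqOn f (fun x => compNegLog f (exp (-x))) (Ici 0) := fun x _ =>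
    (compNegLog_exp_neg f x).symm
  have hδ : ∀ n : ℕ, 0 < 1 / ((n : ℝ) + 1) := fun _ => Nat.one_div_pos_of_nat
  have hg := contDiffOn_compNegLog hf hM
  choose P hP using fun n => exists_polynomial_near_of_contDiffOn_two zero_lt_one hg (hδ n)
  have hbound := fun n x (hx : x ∈ Ici 0) => abs_sub_expSum_le hfg hg (hP n) hx
  have hu : Tendsto (fun n : ℕ => 2 * (1 / ((n : ℝ) + 1))) atTop (𝓝 0) := by
    simpa using tendsto_one_div_add_atTop_nhds_zero_nat.const_mul (2 : ℝ)
  refine ⟨fun n => (P n).natDegree + 1, fun n i => (P n).coeff i, fun _ i => i,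
    fun _ i => i.cast_nonneg, ?_, ?_, ?_⟩ <;>
    refine tendstoUniformlyOn_of_dist_le hu fun n x hx => ?_ <;> rw [Real.dist_eq]
  · simpa [expSum] using (hbound n x hx).1.trans (le_mul_of_one_le_left (hδ n).le one_le_two)
  · simpa [expSum] using (hbound n x hx).2.1.trans (le_mul_of_one_le_left (hδ n).le one_le_two)
  · simpa [expSum] using (hbound n x hx).2.2
end

section
/- Assume condition (A). Then for all 0 < λ₀ < λ, lim_{k→∞} sup_{x ∈ E_k} e^{λ₀ x} | γ_k [ g_k(e^{−λ/k})^{kx} − e^{−λx} ] − x e^{−λx} R(λ) | = 0. -/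
open MeasureTheory Filter Set

/-- `pgfEval p s = Σ_j p_j s^j` is the generating function of the sequence `p`. -/
noncomputable def pgfEval (p : ℕ → ℝ) (s : ℝ) : ℝ := ∑' j : ℕ, p j * s ^ j

/-- `p` is (the coefficient sequence of) a probability generating function. -/
def IsPGF (p : ℕ → ℝ) : Prop := (∀ j, 0 ≤ p j) ∧ (∑' j : ℕ, p j) = 1

/-!
Write `q = e^{-λ/k}`, `f = g_k(q)` and `D_k = kγ_k (f - q)`. As `q = 1 - μ_k/k` with
`μ_k = k(1 - q) = λ + O(1/k)`, `D_k = R_k(μ_k)`, and the uniform Lipschitz bound turns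
`R_k(λ) → R(λ)` into `D_k → R(λ)`. Expanding `f^j` to first order around `q`, with `x = j/k`,
`γ_k(f^j - q^j) - x q^j R(λ) = γ_k·(remainder) + x q^{j-1}(D_k - q R(λ))`.
After multiplying by `e^{λ₀x}`, the second term is `O(|D_k - qR(λ)|)` because `x e^{-(λ-λ₀)x}`
is bounded. Once `γ_k` is large, `|f| ≤ ρ = e^{-λ₁/k}` for the midpoint `λ₁` of `λ₀` and `λ`, so
the remainder is `O(j² (f-q)² ρ^j)` and the first term is
`O(x² e^{-(λ₁-λ₀)x} D_k² / γ_k) = O(1/γ_k)`. Both bounds are uniform in `j`.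
-/

open Real Topology NNReal
open scoped Nat

lemma pow_mul_exp_neg_mul_le {d x : ℝ} (hd : 0 < d) (hx : 0 ≤ x) (n : ℕ) :
    x ^ n * exp (-(d * x)) ≤ n ! / d ^ n := by
  have h := pow_div_factorial_le_exp (d * x) (mul_nonneg hd.le hx) n
  rw [div_le_iff₀ (by positivity)] at h
  rw [exp_neg, ← div_eq_mul_inv, div_le_div_iff₀ (exp_pos _) (by positivity)]
  calc x ^ n * d ^ n = (d * x) ^ n := by ring
    _ ≤ _ := by linarith

lemma abs_pow_succ_sub_pow_succ_sub_le {f q ρ : ℝ} (hρ : 0 < ρ) (hf : |f| ≤ ρ) (hq : |q| ≤ ρ)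
    (n : ℕ) :
    |f ^ (n + 1) - q ^ (n + 1) - (n + 1) * q ^ n * (f - q)|
      ≤ (n + 1) ^ 2 * (f - q) ^ 2 * (ρ ^ (n + 1) / ρ ^ 2) := by
  induction n with
  | zero => simpa using (by positivity : 0 ≤ (f - q) ^ 2 * (ρ / ρ ^ 2))
  | succ n ih =>
    have hid : f ^ (n + 1 + 1) - q ^ (n + 1 + 1) - ((n + 1 : ℕ) + 1) * q ^ (n + 1) * (f - q)
        = f * (f ^ (n + 1) - q ^ (n + 1) - (n + 1) * q ^ n * (f - q))
          + (n + 1) * q ^ n * (f - q) ^ 2 := by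
      push_cast; ring
    have hρn : ρ ^ n = ρ ^ (n + 1 + 1) / ρ ^ 2 := by field_simp; ring
    rw [hid]
    calc _ ≤ |f| * |f ^ (n + 1) - q ^ (n + 1) - (n + 1) * q ^ n * (f - q)|
          + (n + 1) * |q| ^ n * (f - q) ^ 2 := by
          refine (abs_add_le _ _).trans_eq ?_
          rw [abs_mul, abs_mul, abs_mul, abs_pow, abs_of_nonneg (sq_nonneg (f - q)),
            abs_of_nonneg (by positivity : (0 : ℝ) ≤ n + 1)]
      _ ≤ ρ * ((n + 1) ^ 2 * (f - q) ^ 2 * (ρ ^ (n + 1) / ρ ^ 2))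
          + (n + 1) * ρ ^ n * (f - q) ^ 2 := by gcongr
      _ = ((n + 1) ^ 2 + (n + 1)) * (f - q) ^ 2 * (ρ ^ (n + 1 + 1) / ρ ^ 2) := by
          rw [hρn]; ring
      _ ≤ _ := by push_cast; gcongr; nlinarith

lemma abs_le_exp_of_abs_sub_exp_le {f lam₁ lam κ : ℝ} (hlam : 0 ≤ lam) (hlam₁ : lam₁ ≤ lam)
    (hκ : 1 ≤ κ) (hf : |f - exp (-lam / κ)| ≤ (lam - lam₁) * exp (-lam) / κ) :
    |f| ≤ exp (-lam₁ / κ) := by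
  set δ := lam - lam₁
  have hκ0 : 0 < κ := by linarith
  set q := exp (-lam / κ)
  have hq : exp (-lam) ≤ q := exp_le_exp.mpr <| by
    rw [neg_div, neg_le_neg_iff]; exact div_le_self hlam hκ
  have hgap : δ * exp (-lam) / κ ≤ exp (-lam₁ / κ) - q := by
    have hρ : exp (-lam₁ / κ) = q * exp (δ / κ) := by
      rw [← exp_add]; congr 1; ring
    have := add_one_le_exp (δ / κ)
    rw [hρ]
    calc δ * exp (-lam) / κ = δ / κ * exp (-lam) := by ring
      _ ≤ q * (δ / κ) := by rw [mul_comm q]; gcongr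
      _ ≤ _ := by nlinarith [exp_pos (-lam / κ)]
  have := exp_pos (-lam / κ)
  rw [abs_le] at hf ⊢
  constructor <;> linarith

lemma exp_mul_mul_abs_pow_sub_le {κ γ f q lam₀ lam₁ : ℝ} (hκ : 1 ≤ κ) (hγ : 0 < γ)
    (hlam₁ : 0 ≤ lam₁) (hlt : lam₀ < lam₁) (hf : |f| ≤ exp (-lam₁ / κ))
    (hq : |q| ≤ exp (-lam₁ / κ)) (n : ℕ) :
    exp (lam₀ * ((n + 1) / κ)) * (γ * |f ^ (n + 1) - q ^ (n + 1) - (n + 1) * q ^ n * (f - q)|)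
      ≤ 2 * exp (2 * lam₁) * (κ * γ * (f - q)) ^ 2 / ((lam₁ - lam₀) ^ 2 * γ) := by
  have hκ0 : 0 < κ := by linarith
  set x : ℝ := (n + 1) / κ with hx
  have hx0 : 0 ≤ x := by positivity
  have hρ : exp (-lam₁ / κ) ^ (n + 1) / exp (-lam₁ / κ) ^ 2
      = exp (-lam₁ * x) * exp (2 * lam₁ / κ) := by
    rw [← exp_nat_mul, ← exp_nat_mul, ← exp_sub, ← exp_add, hx]
    congr 1
    push_cast
    field_simp
    ring
  have htaylor := abs_pow_succ_sub_pow_succ_sub_le (exp_pos _) hf hq n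
  rw [hρ] at htaylor
  have hexp : exp (2 * lam₁ / κ) ≤ exp (2 * lam₁) :=
    exp_le_exp.mpr (div_le_self (by positivity) hκ)
  have hdecay := pow_mul_exp_neg_mul_le (sub_pos.mpr hlt) hx0 2
  calc exp (lam₀ * x) * (γ * |f ^ (n + 1) - q ^ (n + 1) - (n + 1) * q ^ n * (f - q)|)
      ≤ exp (lam₀ * x) *
          (γ * ((n + 1) ^ 2 * (f - q) ^ 2 * (exp (-lam₁ * x) * exp (2 * lam₁ / κ)))) := by
        gcongr
    _ = (κ * γ * (f - q)) ^ 2 / γ * exp (2 * lam₁ / κ) *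
          (x ^ 2 * exp (-((lam₁ - lam₀) * x))) := by
        rw [show -((lam₁ - lam₀) * x) = lam₀ * x + -lam₁ * x by ring, exp_add, hx]
        field_simp
    _ ≤ (κ * γ * (f - q)) ^ 2 / γ * exp (2 * lam₁) * (2 ! / (lam₁ - lam₀) ^ 2) := by gcongr
    _ = _ := by rw [Nat.factorial_two]; push_cast; field_simp

lemma exp_mul_mul_exp_neg_div_pow_le {κ lam₀ lam : ℝ} (hκ : 1 ≤ κ) (hlam : 0 ≤ lam)
    (hlt : lam₀ < lam) (n : ℕ) :
    exp (lam₀ * ((n + 1) / κ)) * ((n + 1) / κ * exp (-lam / κ) ^ n)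
      ≤ exp lam / (lam - lam₀) := by
  have hκ0 : 0 < κ := by linarith
  set x : ℝ := (n + 1) / κ with hx
  have hpow : exp (-lam / κ) ^ n = exp (-lam * x) * exp (lam / κ) := by
    rw [← exp_nat_mul, ← exp_add, hx]; congr 1; field_simp; ring
  have hexp : exp (lam / κ) ≤ exp lam := exp_le_exp.mpr (div_le_self hlam hκ)
  have hdecay := pow_mul_exp_neg_mul_le (sub_pos.mpr hlt) (by positivity : 0 ≤ x) 1
  calc exp (lam₀ * x) * (x * exp (-lam / κ) ^ n)
      = exp (lam / κ) * (x ^ 1 * exp (-((lam - lam₀) * x))) := by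
        rw [hpow, show -((lam - lam₀) * x) = lam₀ * x + -lam * x by ring, exp_add]; ring
    _ ≤ exp lam * (1 ! / (lam - lam₀) ^ 1) := by gcongr
    _ = _ := by simp [div_eq_mul_inv]

lemma exp_mul_abs_pow_sub_le {κ γ f r lam₀ lam : ℝ} (hκ : 1 ≤ κ) (hγ : 0 < γ) (h₀ : 0 ≤ lam₀)
    (hlt : lam₀ < lam) (hf : |κ * γ * (f - exp (-lam / κ))| ≤ (lam - lam₀) / 2 * exp (-lam) * γ)
    (j : ℕ) :
    exp (lam₀ * (j / κ)) *
        |γ * (f ^ j - exp (-lam * (j / κ))) - j / κ * exp (-lam * (j / κ)) * r|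
      ≤ 8 * exp (lam₀ + lam) / (lam - lam₀) ^ 2 * (κ * γ * (f - exp (-lam / κ))) ^ 2 / γ
        + exp lam / (lam - lam₀) * |κ * γ * (f - exp (-lam / κ)) - exp (-lam / κ) * r| := by
  have hκ0 : 0 < κ := by linarith
  set q := exp (-lam / κ)
  set lam₁ := (lam₀ + lam) / 2 with hlam₁
  have hfq : |f - q| ≤ (lam - lam₁) * exp (-lam) / κ := by
    rw [abs_mul, abs_of_pos (by positivity : 0 < κ * γ), mul_comm, ← le_div_iff₀ (by positivity)]
      at hf
    exact hf.trans_eq (by field_simp; ring)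
  have hfρ : |f| ≤ exp (-lam₁ / κ) :=
    abs_le_exp_of_abs_sub_exp_le (by linarith) (by linarith) hκ hfq
  have hqρ : |q| ≤ exp (-lam₁ / κ) := by
    rw [abs_of_pos (exp_pos _)]; gcongr; linarith
  cases j with
  | zero =>
    simp only [CharP.cast_eq_zero, zero_div, mul_zero, exp_zero, pow_zero, sub_self, mul_one,
      zero_mul, abs_zero]
    positivity
  | succ n =>
    push_cast
    have hqn : exp (-lam * ((n + 1) / κ)) = q ^ (n + 1) := by
      rw [← exp_nat_mul]; push_cast; ring_nf
    have hsplit : γ * (f ^ (n + 1) - q ^ (n + 1)) - (n + 1) / κ * q ^ (n + 1) * r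
        = γ * (f ^ (n + 1) - q ^ (n + 1) - (n + 1) * q ^ n * (f - q))
          + (n + 1) / κ * q ^ n * (κ * γ * (f - q) - q * r) := by
      field_simp; ring
    have hremainder := exp_mul_mul_abs_pow_sub_le (lam₀ := lam₀) hκ hγ (by linarith)
      (by linarith) hfρ hqρ n
    rw [show lam₁ - lam₀ = (lam - lam₀) / 2 by ring, show 2 * lam₁ = lam₀ + lam by ring]
      at hremainder
    have hlinear := exp_mul_mul_exp_neg_div_pow_le hκ (by linarith) hlt n
    rw [hqn, hsplit]
    set A := f ^ (n + 1) - q ^ (n + 1) - (n + 1) * q ^ n * (f - q)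
    set Δ := κ * γ * (f - q) - q * r
    calc _ ≤ exp (lam₀ * ((n + 1) / κ)) * (γ * |A| + (n + 1) / κ * q ^ n * |Δ|) := by
          gcongr
          refine (abs_add_le _ _).trans_eq ?_
          have hcoef : 0 ≤ (n + 1) / κ * q ^ n := by positivity
          rw [abs_mul, abs_mul, abs_of_pos hγ, abs_of_nonneg hcoef]
      _ = exp (lam₀ * ((n + 1) / κ)) * (γ * |A|)
          + exp (lam₀ * ((n + 1) / κ)) * ((n + 1) / κ * q ^ n) * |Δ| := by ring
      _ ≤ _ := by
          gcongr
          exact hremainder.trans_eq (by field_simp; ring)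

lemma Filter.Tendsto.apply_of_lipschitzOnWith {ι α β : Type*} [PseudoMetricSpace α]
    [PseudoMetricSpace β] {l : Filter ι} {F : ι → α → β} {L : ℝ≥0} {s : Set α} {μ : ι → α}
    {a : α} {r : β} (hμ : Tendsto μ l (𝓝 a)) (hF : ∀ᶠ i in l, LipschitzOnWith L (F i) s)
    (hμs : ∀ᶠ i in l, μ i ∈ s) (ha : a ∈ s) (hr : Tendsto (fun i => F i a) l (𝓝 r)) :
    Tendsto (fun i => F i (μ i)) l (𝓝 r) := by
  rw [tendsto_iff_dist_tendsto_zero] at hμ hr ⊢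
  have hbound : Tendsto (fun i => L * dist (μ i) a + dist (F i a) r) l (𝓝 0) := by
    simpa using (hμ.const_mul (L : ℝ)).add hr
  refine squeeze_zero' (Eventually.of_forall fun i => dist_nonneg) ?_ hbound
  filter_upwards [hF, hμs] with i hFi hμi
  calc dist (F i (μ i)) r ≤ dist (F i (μ i)) (F i a) + dist (F i a) r := dist_triangle _ _ _
    _ ≤ _ := by gcongr; exact hFi.dist_le_mul _ hμi _ ha

lemma tendsto_natCast_mul_one_sub_exp_neg_div (lam : ℝ) :
    Tendsto (fun k : ℕ => (k : ℝ) * (1 - exp (-lam / k))) atTop (𝓝 lam) := by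
  rw [tendsto_iff_dist_tendsto_zero]
  refine squeeze_zero' (Eventually.of_forall fun k => dist_nonneg) ?_
    (tendsto_const_div_atTop_nhds_zero_nat (lam ^ 2))
  filter_upwards [eventually_gt_atTop 0,
    tendsto_natCast_atTop_atTop.eventually_ge_atTop |lam|] with k hk hlam
  have hk0 : (0 : ℝ) < k := by exact_mod_cast hk
  have hsmall : |-lam / k| ≤ 1 := by
    rw [abs_div, abs_neg, Nat.abs_cast, div_le_one hk0]
    exact hlam
  rw [Real.dist_eq]
  calc |k * (1 - exp (-lam / k)) - lam| = k * |exp (-lam / k) - 1 - (-lam / k)| := by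
        rw [← abs_of_pos hk0, ← abs_mul, abs_of_pos hk0, ← abs_neg]; congr 1; field_simp; ring
    _ ≤ k * (-lam / k) ^ 2 := by gcongr; exact abs_exp_sub_one_sub_id_le hsmall
    _ = lam ^ 2 / k := by field_simp

lemma natCast_mul_one_sub_exp_neg_div_mem_Icc {lam : ℝ} (hlam : 0 ≤ lam) (k : ℕ) :
    (k : ℝ) * (1 - exp (-lam / k)) ∈ Icc 0 lam := by
  rcases k.eq_zero_or_pos with rfl | hk
  · simpa using hlam
  have hk0 : (0 : ℝ) < k := by exact_mod_cast hk
  have hexp : exp (-lam / k) ≤ 1 := exp_le_one_iff.mpr <| by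
    rw [neg_div]; exact neg_nonpos.mpr (by positivity)
  have hlin := add_one_le_exp (-lam / k)
  refine ⟨mul_nonneg hk0.le (by linarith), ?_⟩
  calc (k : ℝ) * (1 - exp (-lam / k)) ≤ k * (lam / k) := by
        gcongr; rw [neg_div] at hlin ⊢; linarith
    _ = lam := by field_simp

lemma tendsto_apply_exp_neg_div {Φ : ℕ → ℝ → ℝ} {L : ℝ≥0} {lam r : ℝ} (hlam : 0 ≤ lam)
    (hΦ : ∀ᶠ k in atTop, LipschitzOnWith L (fun l => Φ k (1 - l / k)) (Icc 0 lam))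
    (hr : Tendsto (fun k : ℕ => Φ k (1 - lam / k)) atTop (𝓝 r)) :
    Tendsto (fun k : ℕ => Φ k (exp (-lam / k))) atTop (𝓝 r) := by
  refine ((tendsto_natCast_mul_one_sub_exp_neg_div lam).apply_of_lipschitzOnWith hΦ
    (.of_forall (natCast_mul_one_sub_exp_neg_div_mem_Icc hlam)) ⟨hlam, le_rfl⟩ hr).congr' ?_
  filter_upwards [eventually_gt_atTop 0] with k hk
  have hk0 : (k : ℝ) ≠ 0 := by positivity
  congr 1; field_simp; ring

lemma eventually_abs_le_mul_of_tendsto {ι : Type*} {l : Filter ι} {D γ : ι → ℝ} {r c : ℝ}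
    (hD : Tendsto D l (𝓝 r)) (hγ : Tendsto γ l atTop) (hc : 0 < c) :
    ∀ᶠ i in l, |D i| ≤ c * γ i := by
  filter_upwards [hD.abs.eventually_le_const (lt_add_one |r|),
    hγ.eventually_ge_atTop ((|r| + 1) / c)] with i hDi hγi
  calc |D i| ≤ |r| + 1 := hDi
    _ ≤ c * γ i := by rwa [div_le_iff₀' hc] at hγi

lemma tendsto_mul_sq_div_add_mul_abs_sub {ι : Type*} {l : Filter ι} {D γ q : ι → ℝ} {r : ℝ}
    (c₁ c₂ : ℝ) (hD : Tendsto D l (𝓝 r)) (hγ : Tendsto γ l atTop) (hq : Tendsto q l (𝓝 1)) :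
    Tendsto (fun i => c₁ * D i ^ 2 / γ i + c₂ * |D i - q i * r|) l (𝓝 0) := by
  have h₁ := (hD.mul (hD.div_atTop hγ)).const_mul c₁
  have h₂ := (hD.sub (hq.mul_const r)).abs.const_mul c₂
  simp only [mul_zero, one_mul, sub_self, abs_zero] at h₁ h₂
  refine (add_zero (0 : ℝ) ▸ h₁.add h₂).congr fun i => ?_
  ring

theorem stmt8_general
    (R : ℝ → ℝ)
    (γ : ℕ → ℝ)
    (hγtop : Tendsto γ atTop atTop)
    (gp : ℕ → ℕ → ℝ)
    -- condition (A)
    (condA1 : ∀ a : ℝ, 0 < a → ∃ L : NNReal, ∀ k : ℕ, 1 ≤ k → a ≤ (k : ℝ) →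
      LipschitzOnWith L
        (fun l => (k : ℝ) * γ k * (pgfEval (gp k) (1 - l / k) - (1 - l / k)))
        (Icc 0 a))
    (condA2 : ∀ l : ℝ, 0 ≤ l →
      Tendsto (fun k : ℕ => (k : ℝ) * γ k * (pgfEval (gp k) (1 - l / k) - (1 - l / k)))
        atTop (nhds (R l))) :
    ∀ lam₀ lam : ℝ, 0 < lam₀ → lam₀ < lam →
      ∀ ε > (0 : ℝ), ∀ᶠ k : ℕ in atTop, ∀ j : ℕ,
        Real.exp (lam₀ * ((j : ℝ) / k)) *
          |γ k * ((pgfEval (gp k) (Real.exp (-lam / k))) ^ j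
              - Real.exp (-lam * ((j : ℝ) / k)))
            - ((j : ℝ) / k) * Real.exp (-lam * ((j : ℝ) / k)) * R lam| < ε := by
  intro lam₀ lam h₀ hlt ε hε
  have hlam : 0 < lam := h₀.trans hlt
  set q : ℕ → ℝ := fun k => exp (-lam / k)
  set D : ℕ → ℝ := fun k => k * γ k * (pgfEval (gp k) (q k) - q k)
  obtain ⟨L, hL⟩ := condA1 lam hlam
  have hD : Tendsto D atTop (𝓝 (R lam)) :=
    tendsto_apply_exp_neg_div (Φ := fun k s => k * γ k * (pgfEval (gp k) s - s)) hlam.le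
      (by filter_upwards [eventually_ge_atTop 1,
            tendsto_natCast_atTop_atTop.eventually_ge_atTop lam] with k hk hlamk
          exact hL k hk hlamk)
      (condA2 lam hlam.le)
  have hq : Tendsto q atTop (𝓝 1) := by
    simpa [q, Function.comp_def] using
      (continuous_exp.tendsto 0).comp (tendsto_const_div_atTop_nhds_zero_nat (-lam))
  filter_upwards [eventually_ge_atTop 1, hγtop.eventually_gt_atTop 0,
    eventually_abs_le_mul_of_tendsto hD hγtop (by positivity : 0 < (lam - lam₀) / 2 * exp (-lam)),
    (tendsto_mul_sq_div_add_mul_abs_sub _ _ hD hγtop hq).eventually_lt_const hε]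
    with k hk hγk hclose hsmall j
  exact (exp_mul_abs_pow_sub_le (by exact_mod_cast hk) hγk h₀.le hlt hclose j).trans_lt hsmall

/-- under condition (A), for all `0 < λ₀ < λ`,
`lim_{k→∞} sup_{x ∈ E_k} e^{λ₀ x} |γ_k[g_k(e^{−λ/k})^{kx} − e^{−λx}] − x e^{−λx} R(λ)| = 0`,
where `E_k = {j/k : j ∈ ℕ}`. -/
theorem stmt8
    (b c : ℝ) (hc : 0 ≤ c)
    (m : Measure ℝ) (hm : IntegrableOn (fun z => min z (z ^ 2)) (Ioi 0) m)
    (R : ℝ → ℝ)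
    (hR : ∀ l, 0 ≤ l →
      R l = b * l + c * l ^ 2 + ∫ z in Ioi 0, (Real.exp (-l * z) - 1 + l * z) ∂m)
    (γ : ℕ → ℝ) (hγpos : ∀ k, 1 ≤ k → 0 < γ k) (hγmono : Monotone γ)
    (hγtop : Tendsto γ atTop atTop)
    (gp : ℕ → ℕ → ℝ) (hgp : ∀ k, 1 ≤ k → IsPGF (gp k))
    -- condition (A)
    (condA1 : ∀ a : ℝ, 0 < a → ∃ L : NNReal, ∀ k : ℕ, 1 ≤ k → a ≤ (k : ℝ) →
      LipschitzOnWith L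
        (fun l => (k : ℝ) * γ k * (pgfEval (gp k) (1 - l / k) - (1 - l / k)))
        (Icc 0 a))
    (condA2 : ∀ l : ℝ, 0 ≤ l →
      Tendsto (fun k : ℕ => (k : ℝ) * γ k * (pgfEval (gp k) (1 - l / k) - (1 - l / k)))
        atTop (nhds (R l))) :
    ∀ lam₀ lam : ℝ, 0 < lam₀ → lam₀ < lam →
      ∀ ε > (0 : ℝ), ∀ᶠ k : ℕ in atTop, ∀ j : ℕ,
        Real.exp (lam₀ * ((j : ℝ) / k)) *
          |γ k * ((pgfEval (gp k) (Real.exp (-lam / k))) ^ j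
              - Real.exp (-lam * ((j : ℝ) / k)))
            - ((j : ℝ) / k) * Real.exp (-lam * ((j : ℝ) / k)) * R lam| < ε :=
  stmt8_general R γ hγtop gp condA1 condA2
end

section
/- Assume condition (A) and set u_k(λ) = k[1 − g_k(e^{−λ/k})]. Then for every λ > 0, sup_{x ∈ [0,∞)} | (1 − u_k(λ)/k)^{kx} − e^{−λx} | → 0 as k → ∞. -/
open MeasureTheory Filter Set

/-!
Put `λ'_k = k (1 - e^{-λ/k})`, so that `1 - λ'_k / k = e^{-λ/k}` and hence
`u_k(λ) = λ'_k - R_k(λ'_k) / γ_k`. Since `λ'_k ∈ [0, λ]`, the uniform Lipschitz bound together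
with the convergence of `R_k(λ)` keeps `R_k(λ'_k)` bounded, and `γ_k → ∞`; as `λ'_k → λ` this
gives `u_k(λ) → λ`. Finally `(1 - u_k/k)^{kx} = e^{-μ_k x}` with `μ_k = -k log (1 - u_k/k) → λ`,
and `|e^{-μx} - e^{-λx}| ≤ |μ - λ| / min μ λ` uniformly in `x ≥ 0`.
-/

open Asymptotics Topology
open scoped NNReal

theorem HasDerivAt.tendsto_natCast_mul_sub {f : ℝ → ℝ} {f' a lam : ℝ} (hf : HasDerivAt f f' a)
    {δ : ℕ → ℝ} (hδ : Tendsto δ atTop (𝓝 lam)) :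
    Tendsto (fun k : ℕ => (k : ℝ) * (f (a + δ k / k) - f a)) atTop (𝓝 (f' * lam)) := by
  have hstep : Tendsto (fun k : ℕ => a + δ k / k) atTop (𝓝 a) := by
    simpa using tendsto_const_nhds.add (hδ.div_atTop tendsto_natCast_atTop_atTop)
  have hk : ∀ᶠ k : ℕ in atTop, (k : ℝ) ≠ 0 := by
    filter_upwards [eventually_ne_atTop 0] with k hk using Nat.cast_ne_zero.2 hk
  have hscaled : (fun k : ℕ => (k : ℝ) * (a + δ k / k - a)) =ᶠ[atTop] δ := by
    filter_upwards [hk] with k hk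
    field_simp
    ring
  have hrem : Tendsto (fun k : ℕ => (k : ℝ) * (f (a + δ k / k) - f a - (a + δ k / k - a) • f'))
      atTop (𝓝 0) :=
    (isLittleO_one_iff ℝ).1 <| ((isBigO_refl (fun k : ℕ => (k : ℝ)) atTop).mul_isLittleO
      (hf.isLittleO.comp_tendsto hstep)).trans_isBigO
      ((hδ.isBigO_one ℝ).congr' hscaled.symm EventuallyEq.rfl)
  refine (by simpa using hrem.add (hδ.const_mul f') : Tendsto _ _ (𝓝 (f' * lam))).congr' ?_
  filter_upwards [hk] with k hk
  field_simp
  ring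

theorem tendsto_natCast_mul_one_sub_exp (lam : ℝ) :
    Tendsto (fun k : ℕ => (k : ℝ) * (1 - Real.exp (-lam / k))) atTop (𝓝 lam) := by
  have hexp : HasDerivAt Real.exp 1 0 := by simpa using Real.hasDerivAt_exp 0
  have h := (hexp.tendsto_natCast_mul_sub (tendsto_const_nhds (x := -lam))).neg
  rw [one_mul, neg_neg] at h
  refine h.congr fun k => ?_
  simp only [zero_add, Real.exp_zero]
  ring

theorem tendsto_neg_natCast_mul_log_one_sub_div {δ : ℕ → ℝ} {lam : ℝ}
    (hδ : Tendsto δ atTop (𝓝 lam)) :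
    Tendsto (fun k : ℕ => -((k : ℝ) * Real.log (1 - δ k / k))) atTop (𝓝 lam) := by
  have hlog : HasDerivAt Real.log 1 1 := by simpa using Real.hasDerivAt_log one_ne_zero
  simpa [neg_div, ← sub_eq_add_neg] using (hlog.tendsto_natCast_mul_sub hδ.neg).neg

theorem abs_exp_neg_mul_sub_exp_neg_mul_le {a b x : ℝ} (ha : 0 < a) (hb : 0 < b) (hx : 0 ≤ x) :
    |Real.exp (-a * x) - Real.exp (-b * x)| ≤ |a - b| / min a b := by
  wlog hab : a ≤ b generalizing a b
  · rw [abs_sub_comm, abs_sub_comm a, min_comm]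
    exact this hb ha (le_of_not_ge hab)
  rw [min_eq_left hab, abs_of_nonpos (sub_nonpos.2 hab), neg_sub,
    abs_of_nonneg (sub_nonneg.2 (Real.exp_le_exp.2 (by nlinarith))), le_div_iff₀ ha]
  have hfactor : Real.exp (-a * x) - Real.exp (-b * x)
      = Real.exp (-a * x) * (1 - Real.exp (-(b - a) * x)) := by
    rw [mul_sub, mul_one, ← Real.exp_add]; ring_nf
  have hlin : 1 - Real.exp (-(b - a) * x) ≤ (b - a) * x := by
    linarith [Real.add_one_le_exp (-(b - a) * x)]
  have hdecay : a * x * Real.exp (-a * x) ≤ 1 := by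
    have hinv : Real.exp (-a * x) * Real.exp (a * x) = 1 := by
      rw [← Real.exp_add]; simp
    nlinarith [Real.add_one_le_exp (a * x), Real.exp_pos (-a * x)]
  rw [hfactor]
  nlinarith [mul_le_mul_of_nonneg_left hlin (Real.exp_pos (-a * x)).le,
    mul_le_mul_of_nonneg_left hdecay (sub_nonneg.2 hab)]

theorem tendstoUniformlyOn_exp_neg_mul {ι : Type*} {l : Filter ι} {μ : ι → ℝ} {lam : ℝ}
    (hlam : 0 < lam) (hμ : Tendsto μ l (𝓝 lam)) :
    TendstoUniformlyOn (fun k x => Real.exp (-μ k * x)) (fun x => Real.exp (-lam * x)) l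
      (Ici 0) := by
  rw [Metric.tendstoUniformlyOn_iff]
  intro ε hε
  have hpos : ∀ᶠ k in l, lam / 2 < μ k := hμ.eventually (eventually_gt_nhds (by linarith))
  have hclose : ∀ᶠ k in l, |μ k - lam| < lam * ε / 2 := by
    simpa [Real.dist_eq] using Metric.tendsto_nhds.1 hμ _ (by positivity)
  filter_upwards [hpos, hclose] with k hpos hclose x hx
  have hmin : lam / 2 ≤ min lam (μ k) := le_min (by linarith) hpos.le
  calc dist (Real.exp (-lam * x)) (Real.exp (-μ k * x))
      ≤ |lam - μ k| / min lam (μ k) :=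
        abs_exp_neg_mul_sub_exp_neg_mul_le hlam (by linarith) hx
    _ ≤ |lam - μ k| / (lam / 2) := by gcongr
    _ < (lam * ε / 2) / (lam / 2) := by rw [abs_sub_comm]; gcongr
    _ = ε := by field_simp

theorem tendstoUniformlyOn_one_sub_div_rpow {δ : ℕ → ℝ} {lam : ℝ} (hlam : 0 < lam)
    (hδ : Tendsto δ atTop (𝓝 lam)) :
    TendstoUniformlyOn (fun (k : ℕ) (x : ℝ) => (1 - δ k / k) ^ ((k : ℝ) * x))
      (fun x => Real.exp (-lam * x)) atTop (Ici 0) := by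
  refine (tendstoUniformlyOn_exp_neg_mul hlam
    (tendsto_neg_natCast_mul_log_one_sub_div hδ)).congr ?_
  have hbase : ∀ᶠ k : ℕ in atTop, 0 < 1 - δ k / k := by
    have := (hδ.div_atTop tendsto_natCast_atTop_atTop).const_sub 1
    rw [sub_zero] at this
    exact this.eventually (eventually_gt_nhds one_pos)
  filter_upwards [hbase] with k hbase x _
  simp only [Real.rpow_def_of_pos hbase]
  ring_nf

theorem isBigO_one_of_lipschitzOnWith {ι α E : Type*} [PseudoMetricSpace α]
    [SeminormedAddCommGroup E] {l : Filter ι} {f : ι → α → E} {s : Set α} {L : ℝ≥0} {a : α}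
    {y : E} {x : ι → α} (hs : Bornology.IsBounded s) (ha : a ∈ s)
    (hf : ∀ᶠ k in l, LipschitzOnWith L (f k) s) (hx : ∀ᶠ k in l, x k ∈ s)
    (hfa : Tendsto (fun k => f k a) l (𝓝 y)) :
    (fun k => f k (x k)) =O[l] (fun _ => (1 : ℝ)) := by
  have hdev : (fun k => f k (x k) - f k a) =O[l] (fun _ => (1 : ℝ)) := by
    refine IsBigO.of_bound (L * Metric.diam s) ?_
    filter_upwards [hf, hx] with k hf hx
    rw [← dist_eq_norm, norm_one, mul_one]
    calc dist (f k (x k)) (f k a) ≤ L * dist (x k) a := hf.dist_le_mul _ hx _ ha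
      _ ≤ L * Metric.diam s := by gcongr; exact Metric.dist_le_diam_of_mem hs hx ha
  simpa using hdev.add (hfa.isBigO_one ℝ)

/-- The paper's `R_k`. -/
noncomputable def rescaledMechanism (γ : ℕ → ℝ) (g : ℕ → ℝ → ℝ) (k : ℕ) (l : ℝ) : ℝ :=
  k * γ k * (g k (1 - l / k) - (1 - l / k))

theorem natCast_mul_one_sub_eq_sub_rescaledMechanism_div {γ : ℕ → ℝ} {g : ℕ → ℝ → ℝ} {k : ℕ}
    (hk : (k : ℝ) ≠ 0) (hγ : γ k ≠ 0) (s : ℝ) :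
    k * (1 - g k s) = k * (1 - s) - rescaledMechanism γ g k (k * (1 - s)) / γ k := by
  have hs : 1 - k * (1 - s) / k = s := by field_simp; ring
  rw [rescaledMechanism, hs]
  field_simp
  ring

theorem natCast_mul_one_sub_exp_mem_Icc {lam : ℝ} (hlam : 0 ≤ lam) (k : ℕ) :
    (k : ℝ) * (1 - Real.exp (-lam / k)) ∈ Icc 0 lam := by
  rcases k.eq_zero_or_pos with rfl | hk
  · simpa using hlam
  have hk : (0 : ℝ) < k := Nat.cast_pos.2 hk
  constructor
  · have : Real.exp (-lam / k) ≤ 1 :=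
      Real.exp_le_one_iff.2 (by rw [neg_div]; linarith [div_nonneg hlam hk.le])
    nlinarith
  · have : 1 - lam / k ≤ Real.exp (-lam / k) := by
      linarith [Real.add_one_le_exp (-lam / k), neg_div (k : ℝ) lam]
    calc (k : ℝ) * (1 - Real.exp (-lam / k)) ≤ k * (lam / k) := by gcongr; linarith
      _ = lam := by field_simp

theorem tendsto_natCast_mul_one_sub_comp_exp {γ : ℕ → ℝ} {g : ℕ → ℝ → ℝ} {lam r : ℝ}
    {L : ℝ≥0} (hlam : 0 ≤ lam) (hγ : Tendsto γ atTop atTop)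
    (hLip : ∀ᶠ k in atTop, LipschitzOnWith L (rescaledMechanism γ g k) (Icc 0 lam))
    (hR : Tendsto (fun k => rescaledMechanism γ g k lam) atTop (𝓝 r)) :
    Tendsto (fun k : ℕ => (k : ℝ) * (1 - g k (Real.exp (-lam / k)))) atTop (𝓝 lam) := by
  set lam' : ℕ → ℝ := fun k => k * (1 - Real.exp (-lam / k))
  have hbounded : (fun k => rescaledMechanism γ g k (lam' k)) =O[atTop] (fun _ => (1 : ℝ)) :=
    isBigO_one_of_lipschitzOnWith (Metric.isBounded_Icc 0 lam) (right_mem_Icc.2 hlam) hLip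
      (Eventually.of_forall (natCast_mul_one_sub_exp_mem_Icc hlam)) hR
  have hvanish : Tendsto (fun k => rescaledMechanism γ g k (lam' k) / γ k) atTop (𝓝 0) := by
    simpa [div_eq_mul_inv] using
      ((hbounded.mul (isBigO_refl (fun k => (γ k)⁻¹) atTop)).trans_tendsto
      (hγ.inv_tendsto_atTop.congr fun k => (one_mul _).symm))
  have hlim := (tendsto_natCast_mul_one_sub_exp lam).sub hvanish
  rw [sub_zero] at hlim
  refine hlim.congr' ?_
  filter_upwards [eventually_ne_atTop 0, hγ.eventually_gt_atTop 0] with k hk hγk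
  exact (natCast_mul_one_sub_eq_sub_rescaledMechanism_div (Nat.cast_ne_zero.2 hk) hγk.ne' _).symm

theorem stmt10_general
    (R : ℝ → ℝ)
    (γ : ℕ → ℝ)
    (hγtop : Tendsto γ atTop atTop)
    (gp : ℕ → ℕ → ℝ)
    -- condition (A)
    (condA1 : ∀ a : ℝ, 0 < a → ∃ L : NNReal, ∀ k : ℕ, 1 ≤ k → a ≤ (k : ℝ) →
      LipschitzOnWith L
        (fun l => (k : ℝ) * γ k * (pgfEval (gp k) (1 - l / k) - (1 - l / k)))
        (Icc 0 a))
    (condA2 : ∀ l : ℝ, 0 ≤ l →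
      Tendsto (fun k : ℕ => (k : ℝ) * γ k * (pgfEval (gp k) (1 - l / k) - (1 - l / k)))
        atTop (nhds (R l))) :
    ∀ lam : ℝ, 0 < lam →
      ∀ ε > (0 : ℝ), ∀ᶠ k : ℕ in atTop, ∀ x : ℝ, 0 ≤ x →
        |(1 - (k : ℝ) * (1 - pgfEval (gp k) (Real.exp (-lam / k))) / k) ^ ((k : ℝ) * x)
          - Real.exp (-lam * x)| < ε := by
  intro lam hlam ε hε
  obtain ⟨L, hL⟩ := condA1 lam hlam
  have hLip : ∀ᶠ k in atTop,
      LipschitzOnWith L (rescaledMechanism γ (fun k => pgfEval (gp k)) k) (Icc 0 lam) := by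
    filter_upwards [eventually_ge_atTop 1, tendsto_natCast_atTop_atTop.eventually_ge_atTop lam]
      with k hk hlamk using hL k hk hlamk
  have hu := tendsto_natCast_mul_one_sub_comp_exp hlam.le hγtop hLip (condA2 lam hlam.le)
  have huniform := Metric.tendstoUniformlyOn_iff.1 (tendstoUniformlyOn_one_sub_div_rpow hlam hu)
  filter_upwards [huniform ε hε] with k hk x hx
  simpa [Real.dist_eq, abs_sub_comm] using hk x hx

/-- under condition (A), with `u_k(λ) = k[1 − g_k(e^{−λ/k})]`, for every
`λ > 0` one has `sup_{x ≥ 0} |(1 − u_k(λ)/k)^{kx} − e^{−λx}| → 0` as `k → ∞`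
(the power being a real power). -/
theorem stmt10
    (b c : ℝ) (hc : 0 ≤ c)
    (m : Measure ℝ) (hm : IntegrableOn (fun z => min z (z ^ 2)) (Ioi 0) m)
    (R : ℝ → ℝ)
    (hR : ∀ l, 0 ≤ l →
      R l = b * l + c * l ^ 2 + ∫ z in Ioi 0, (Real.exp (-l * z) - 1 + l * z) ∂m)
    (γ : ℕ → ℝ) (hγpos : ∀ k, 1 ≤ k → 0 < γ k) (hγmono : Monotone γ)
    (hγtop : Tendsto γ atTop atTop)
    (gp : ℕ → ℕ → ℝ) (hgp : ∀ k, 1 ≤ k → IsPGF (gp k))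
    -- condition (A)
    (condA1 : ∀ a : ℝ, 0 < a → ∃ L : NNReal, ∀ k : ℕ, 1 ≤ k → a ≤ (k : ℝ) →
      LipschitzOnWith L
        (fun l => (k : ℝ) * γ k * (pgfEval (gp k) (1 - l / k) - (1 - l / k)))
        (Icc 0 a))
    (condA2 : ∀ l : ℝ, 0 ≤ l →
      Tendsto (fun k : ℕ => (k : ℝ) * γ k * (pgfEval (gp k) (1 - l / k) - (1 - l / k)))
        atTop (nhds (R l))) :
    ∀ lam : ℝ, 0 < lam →
      ∀ ε > (0 : ℝ), ∀ᶠ k : ℕ in atTop, ∀ x : ℝ, 0 ≤ x →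
        |(1 - (k : ℝ) * (1 - pgfEval (gp k) (Real.exp (-lam / k))) / k) ^ ((k : ℝ) * x)
          - Real.exp (-lam * x)| < ε :=
  stmt10_general R γ hγtop gp condA1 condA2
end

section
/- Assume conditions (A), (B), (C) and the growth condition, and for λ > 0 and x ∈ E_k define B_k(λ,x) = γ_k · g_k(e^{−λ/k})^{kx} · [ h_k^{(kx)}(g_k(e^{−λ/k})) − 1 ]. Then for each λ > 0, lim_{k→∞} sup_{x ∈ E_k} | B_k(λ,x) − e^{−λx} F(λ,x) | = 0. -/
open MeasureTheory Filter Set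

/-- The mean `g'(1−) = Σ_j j·p_j ∈ [0,∞]` of a probability generating function. -/
noncomputable def pgfMean (p : ℕ → ℝ) : ENNReal :=
  ∑' j : ℕ, (j : ENNReal) * ENNReal.ofReal (p j)

/-!
Write `S_k = g_k(e^{-λ/k})` and `φ_{k,j}(u) = γ_k (h_k^{(j)}(u) - 1)`, so that
`B_k(λ, x) = S_k^j φ_{k,j}(S_k)` for `x = j/k`. Condition (A), evaluated at
`μ_k = k (1 - e^{-λ/k}) → λ`, gives `k (S_k - e^{-λ/k}) = O(1/γ_k) → 0`; hence `k (1 - S_k) → λ`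
and `S_k^j ≤ e^{-λx/2}` for large `k`. Condition (C) makes `φ_{k,j}` Lipschitz on `[0,1]` with
constant `K₁ (1 + x) k`, and the growth condition gives `|F(λ,x)| ≤ λ K (1 + x)`. Split
`B_k - e^{-λx} F = S_k^j (φ(S_k) - φ(1 - λ/k)) + S_k^j (φ(1 - λ/k) - F) + (S_k^j - e^{-λx}) F`.
Since `(1 + x)^2 e^{-λx/2}` is bounded, the first and last terms are `O(|k (1 - S_k) - λ|)` and
`O(|k (S_k - e^{-λ/k})|)` uniformly in `x`; the middle one is small for `x ≤ a` by condition (B)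
and is `O(1/x)` uniformly, hence small for `x > a`.
-/

open Real Topology NNReal

namespace IsPGF

variable {p : ℕ → ℝ}

lemma summable (h : IsPGF p) : Summable p := by
  by_contra hs
  exact zero_ne_one ((tsum_eq_zero_of_not_summable hs).symm.trans h.2)

lemma summable_mul_pow (h : IsPGF p) {s : ℝ} (hs : s ∈ Icc 0 1) :
    Summable fun j => p j * s ^ j :=
  Summable.of_nonneg_of_le (fun j => mul_nonneg (h.1 j) (pow_nonneg hs.1 j))
    (fun j => mul_le_of_le_one_right (h.1 j) (pow_le_one₀ hs.1 hs.2)) h.summable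

lemma pgfEval_mem_Icc (h : IsPGF p) {s : ℝ} (hs : s ∈ Icc 0 1) : pgfEval p s ∈ Icc 0 1 := by
  refine ⟨tsum_nonneg fun j => mul_nonneg (h.1 j) (pow_nonneg hs.1 j), h.2 ▸ ?_⟩
  exact (h.summable_mul_pow hs).tsum_le_tsum
    (fun j => mul_le_of_le_one_right (h.1 j) (pow_le_one₀ hs.1 hs.2)) h.summable

lemma pgfEval_one (h : IsPGF p) : pgfEval p 1 = 1 := by
  simp [pgfEval, h.2]

lemma ofReal_abs_pgfEval_sub_le (h : IsPGF p) {u v : ℝ} (hu : u ∈ Icc 0 1)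
    (hv : v ∈ Icc 0 1) :
    ENNReal.ofReal |pgfEval p u - pgfEval p v| ≤ pgfMean p * ENNReal.ofReal |u - v| := by
  have hsum : Summable fun j => p j * u ^ j - p j * v ^ j :=
    (h.summable_mul_pow hu).sub (h.summable_mul_pow hv)
  have hterm (j : ℕ) : |p j * u ^ j - p j * v ^ j| ≤ j * p j * |u - v| := by
    have hmax : max |u| |v| ^ (j - 1) ≤ 1 :=
      pow_le_one₀ (le_max_of_le_left (abs_nonneg u))
        (max_le (abs_le.2 ⟨by linarith [hu.1], hu.2⟩) (abs_le.2 ⟨by linarith [hv.1], hv.2⟩))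
    calc |p j * u ^ j - p j * v ^ j| = p j * |u ^ j - v ^ j| := by
          rw [← mul_sub, abs_mul, abs_of_nonneg (h.1 j)]
      _ ≤ p j * (|u - v| * j * 1) := by
          gcongr
          · exact h.1 j
          · exact (abs_pow_sub_pow_le u v j).trans (by gcongr)
      _ = j * p j * |u - v| := by ring
  calc ENNReal.ofReal |pgfEval p u - pgfEval p v|
      ≤ ENNReal.ofReal (∑' j, |p j * u ^ j - p j * v ^ j|) := by
        rw [pgfEval, pgfEval, ← (h.summable_mul_pow hu).tsum_sub (h.summable_mul_pow hv)]
        exact ENNReal.ofReal_le_ofReal (norm_tsum_le_tsum_norm hsum.norm)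
    _ = ∑' j, ENNReal.ofReal |p j * u ^ j - p j * v ^ j| :=
        ENNReal.ofReal_tsum_of_nonneg (fun j => abs_nonneg _) hsum.abs
    _ ≤ ∑' j : ℕ, (j : ENNReal) * ENNReal.ofReal (p j) * ENNReal.ofReal |u - v| := by
        refine ENNReal.tsum_le_tsum fun j => ?_
        rw [← ENNReal.ofReal_natCast, ← ENNReal.ofReal_mul (Nat.cast_nonneg j),
          ← ENNReal.ofReal_mul (mul_nonneg j.cast_nonneg (h.1 j))]
        exact ENNReal.ofReal_le_ofReal (hterm j)
    _ = pgfMean p * ENNReal.ofReal |u - v| := ENNReal.tsum_mul_right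

lemma mul_abs_pgfEval_sub_le (h : IsPGF p) {c d : ℝ} (hc : 0 ≤ c) (hd : 0 ≤ d)
    (hmean : ENNReal.ofReal c * pgfMean p ≤ ENNReal.ofReal d) {u v : ℝ} (hu : u ∈ Icc 0 1)
    (hv : v ∈ Icc 0 1) : c * |pgfEval p u - pgfEval p v| ≤ d * |u - v| := by
  rw [← ENNReal.ofReal_le_ofReal_iff (by positivity), ENNReal.ofReal_mul hc,
    ENNReal.ofReal_mul hd]
  calc ENNReal.ofReal c * ENNReal.ofReal |pgfEval p u - pgfEval p v|
      ≤ ENNReal.ofReal c * (pgfMean p * ENNReal.ofReal |u - v|) := by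
        gcongr; exact h.ofReal_abs_pgfEval_sub_le hu hv
    _ = ENNReal.ofReal c * pgfMean p * ENNReal.ofReal |u - v| := (mul_assoc ..).symm
    _ ≤ ENNReal.ofReal d * ENNReal.ofReal |u - v| := by gcongr

lemma abs_mul_pgfEval_sub_one_sub_le (h : IsPGF p) {γ k d : ℝ} (hγ : 0 ≤ γ) (hk : 0 < k)
    (hd : 0 ≤ d) (hmean : ENNReal.ofReal (γ / k) * pgfMean p ≤ ENNReal.ofReal d) {u v : ℝ}
    (hu : u ∈ Icc 0 1) (hv : v ∈ Icc 0 1) :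
    |γ * (pgfEval p u - 1) - γ * (pgfEval p v - 1)| ≤ d * (k * |u - v|) :=
  calc |γ * (pgfEval p u - 1) - γ * (pgfEval p v - 1)|
      = k * (γ / k * |pgfEval p u - pgfEval p v|) := by
        rw [← mul_sub, sub_sub_sub_cancel_right, abs_mul, abs_of_nonneg hγ]; field_simp
    _ ≤ k * (d * |u - v|) := mul_le_mul_of_nonneg_left
        (h.mul_abs_pgfEval_sub_le (div_nonneg hγ hk.le) hd hmean hu hv) hk.le
    _ = d * (k * |u - v|) := by ring

end IsPGF

lemma floor_natCast_mul_natCast_div {k : ℕ} (hk : k ≠ 0) (j : ℕ) :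
    ⌊(k : ℝ) * (j / k)⌋₊ = j := by
  rw [mul_div_cancel₀ _ (Nat.cast_ne_zero.2 hk), Nat.floor_natCast]

lemma one_add_sq_mul_exp_neg_le {c x : ℝ} (hc : 0 < c) (hx : 0 ≤ x) :
    (1 + x) ^ 2 * exp (-(c * x)) ≤ max 1 (2 / c) ^ 2 := by
  have hlin : 1 + x ≤ max 1 (2 / c) * exp (c * x / 2) := by
    calc 1 + x ≤ max 1 (2 / c) * (1 + c * x / 2) := by
          have h1 := le_max_left 1 (2 / c)
          have h2 : x ≤ max 1 (2 / c) * (c * x / 2) := by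
            calc x = 2 / c * (c * x / 2) := by field_simp
              _ ≤ _ := by gcongr; exact le_max_right _ _
          nlinarith
      _ ≤ max 1 (2 / c) * exp (c * x / 2) := by
          gcongr; linarith [add_one_le_exp (c * x / 2)]
  calc (1 + x) ^ 2 * exp (-(c * x)) ≤ (max 1 (2 / c) * exp (c * x / 2)) ^ 2 * exp (-(c * x)) := by
        gcongr
    _ = max 1 (2 / c) ^ 2 := by
        rw [mul_pow, ← exp_nat_mul, mul_assoc, ← exp_add]
        ring_nf
        rw [exp_zero, mul_one]

lemma pow_le_exp_neg_of_le_mul_one_sub {s c k : ℝ} (hs : 0 ≤ s) (hk : 0 < k)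
    (hc : c ≤ k * (1 - s)) (j : ℕ) : s ^ j ≤ exp (-(c * (j / k))) := by
  have hs' : s ≤ exp (-(1 - s)) := by linarith [add_one_le_exp (-(1 - s))]
  calc s ^ j ≤ exp (-(1 - s)) ^ j := by gcongr
    _ = exp (-(j * (1 - s))) := by rw [← exp_nat_mul]; ring_nf
    _ ≤ exp (-(c * (j / k))) := by
        refine exp_le_exp.2 (neg_le_neg ?_)
        calc c * (j / k) ≤ k * (1 - s) * (j / k) := by gcongr
          _ = j * (1 - s) := by field_simp

lemma abs_pow_sub_pow_le_of_le_exp_neg {s t c : ℝ} (hs : 0 ≤ s) (ht : 0 ≤ t)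
    (hsc : s ≤ exp (-c)) (htc : t ≤ exp (-c)) (n : ℕ) :
    |s ^ n - t ^ n| ≤ |s - t| * n * (exp c * exp (-(c * n))) := by
  have hmax : max |s| |t| ^ (n - 1) ≤ exp (-c) ^ (n - 1) := by
    gcongr; exact max_le (by rwa [abs_of_nonneg hs]) (by rwa [abs_of_nonneg ht])
  refine (abs_pow_sub_pow_le s t n).trans ?_
  rcases n with _ | n
  · simp
  · calc |s - t| * ↑(n + 1) * max |s| |t| ^ (n + 1 - 1)
        ≤ |s - t| * ↑(n + 1) * exp (-c) ^ (n + 1 - 1) := by gcongr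
      _ = |s - t| * ↑(n + 1) * (exp c * exp (-(c * ↑(n + 1)))) := by
        rw [Nat.add_sub_cancel, ← exp_nat_mul, ← exp_add]
        push_cast; ring_nf

lemma tendstoUniformly_zero_of_abs_le {ι κ : Type*} {l : Filter κ} {f : κ → ι → ℝ} {a : κ → ℝ}
    (ha : Tendsto a l (𝓝 0)) (hf : ∀ᶠ k in l, ∀ i, |f k i| ≤ a k) :
    TendstoUniformly f 0 l := by
  refine Metric.tendstoUniformly_iff.2 fun ε hε => ?_
  filter_upwards [hf, ha.eventually (gt_mem_nhds hε)] with k hk hak i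
  simpa [dist_zero_left] using (hk i).trans_lt hak

lemma tendstoUniformly_zero_of_local_of_decay {ι κ : Type*} {l : Filter κ} {f : κ → ι → ℝ}
    (x : κ → ι → ℝ) {C : ℝ}
    (hloc : ∀ a > 0, ∀ ε > 0, ∀ᶠ k in l, ∀ i, x k i ≤ a → |f k i| < ε)
    (hdecay : ∀ᶠ k in l, ∀ i, |f k i| * x k i ≤ C) : TendstoUniformly f 0 l := by
  refine Metric.tendstoUniformly_iff.2 fun ε hε => ?_
  filter_upwards [hloc (|C| / ε + 1) (by positivity) ε hε, hdecay] with k hnear hfar i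
  rw [Pi.zero_apply, dist_zero_left, Real.norm_eq_abs]
  rcases le_or_gt (x k i) (|C| / ε + 1) with hx | hx
  · exact hnear i hx
  · have hεx : |C| < ε * x k i :=
      calc |C| = ε * (|C| / ε) := by field_simp
        _ < ε * x k i := by gcongr; linarith
    have hx0 : 0 < x k i := lt_trans (by positivity) hx
    exact lt_of_mul_lt_mul_right ((hfar i).trans_lt ((le_abs_self C).trans_lt hεx)) hx0.le

lemma mul_one_sub_exp_neg_div_mem_Icc {lam k : ℝ} (hlam : 0 ≤ lam) (hk : 0 < k) :
    k * (1 - exp (-lam / k)) ∈ Icc 0 lam := by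
  refine ⟨mul_nonneg hk.le (sub_nonneg.2 (exp_le_one_iff.2 ?_)), ?_⟩
  · exact div_nonpos_of_nonpos_of_nonneg (neg_nonpos.2 hlam) hk.le
  · calc k * (1 - exp (-lam / k)) ≤ k * (lam / k) := by
          gcongr; linarith [add_one_le_exp (-lam / k), neg_div k lam]
      _ = lam := by field_simp

lemma tendsto_nat_mul_one_sub_exp_neg_div (lam : ℝ) :
    Tendsto (fun k : ℕ => k * (1 - exp (-lam / k))) atTop (𝓝 lam) := by
  have hbound : ∀ᶠ k : ℕ in atTop, |k * (1 - exp (-lam / k)) - lam| ≤ lam ^ 2 / k := by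
    filter_upwards [eventually_ge_atTop 1,
      tendsto_natCast_atTop_atTop.eventually_ge_atTop |lam|] with k hk hklam
    have hkpos : (0 : ℝ) < k := by exact_mod_cast hk
    have hsmall : |-lam / k| ≤ 1 := by
      rw [abs_div, abs_neg, Nat.abs_cast]; exact div_le_one_of_le₀ hklam hkpos.le
    calc |k * (1 - exp (-lam / k)) - lam| = k * |exp (-lam / k) - 1 - (-lam / k)| := by
          rw [show k * (1 - exp (-lam / k)) - lam = k * -(exp (-lam / k) - 1 - (-lam / k)) by
            field_simp; ring, abs_mul, abs_neg, abs_of_pos hkpos]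
      _ ≤ k * (-lam / k) ^ 2 := by gcongr; exact abs_exp_sub_one_sub_id_le hsmall
      _ = lam ^ 2 / k := by field_simp
  rw [tendsto_iff_norm_sub_tendsto_zero]
  exact squeeze_zero_norm' (by simpa using hbound) (tendsto_const_div_atTop_nhds_zero_nat _)

lemma exists_eventually_abs_le_of_lipschitzOnWith {κ : Type*} {l : Filter κ}
    {R : κ → ℝ → ℝ} {s : Set ℝ} {L : ℝ≥0} {a r : ℝ} {μ : κ → ℝ} (hs : Bornology.IsBounded s)
    (ha : a ∈ s) (hR : ∀ᶠ k in l, LipschitzOnWith L (R k) s)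
    (hlim : Tendsto (fun k => R k a) l (𝓝 r)) (hμ : ∀ᶠ k in l, μ k ∈ s) :
    ∃ C, ∀ᶠ k in l, |R k (μ k)| ≤ C := by
  refine ⟨L * Metric.diam s + (|r| + 1), ?_⟩
  filter_upwards [hR, hμ, hlim.abs.eventually (gt_mem_nhds (lt_add_one |r|))]
    with k hRk hμk hak
  have hlip : |R k (μ k) - R k a| ≤ L * Metric.diam s := by
    rw [← Real.dist_eq]
    exact (hRk.dist_le_mul _ hμk _ ha).trans (by gcongr; exact Metric.dist_le_diam_of_mem hs hμk ha)
  linarith [abs_sub_abs_le_abs_sub (R k (μ k)) (R k a)]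

lemma abs_neg_mul_add_integral_exp_neg_sub_one_le {ν : Measure ℝ} {q : ℝ → ℝ} {β l : ℝ}
    (hl : 0 ≤ l) (hβ : 0 ≤ β) (hq : ∀ z, 0 < z → 0 ≤ q z)
    (hqint : IntegrableOn (fun z => q z * z) (Ioi 0) ν) :
    |-β * l + ∫ z in Ioi 0, (exp (-l * z) - 1) * q z ∂ν|
      ≤ l * (β + ∫ z in Ioi 0, q z * z ∂ν) := by
  have hint : |∫ z in Ioi 0, (exp (-l * z) - 1) * q z ∂ν| ≤ ∫ z in Ioi 0, l * (q z * z) ∂ν := by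
    rw [← Real.norm_eq_abs]
    refine norm_integral_le_of_norm_le (hqint.const_mul l)
      ((ae_restrict_iff' measurableSet_Ioi).2 (Eventually.of_forall fun z (hz : 0 < z) => ?_))
    have h1 : exp (-l * z) ≤ 1 := exp_le_one_iff.2 (by nlinarith)
    have h2 : 1 - l * z ≤ exp (-l * z) := by linarith [add_one_le_exp (-l * z)]
    rw [Real.norm_eq_abs, abs_mul, abs_of_nonpos (by linarith), abs_of_nonneg (hq z hz)]
    nlinarith [hq z hz]
  rw [integral_const_mul] at hint
  calc |-β * l + ∫ z in Ioi 0, (exp (-l * z) - 1) * q z ∂ν|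
      ≤ |-β * l| + |∫ z in Ioi 0, (exp (-l * z) - 1) * q z ∂ν| := abs_add_le _ _
    _ ≤ β * l + l * ∫ z in Ioi 0, q z * z ∂ν := by
        rw [abs_mul, abs_neg, abs_of_nonneg hβ, abs_of_nonneg hl]; linarith
    _ = l * (β + ∫ z in Ioi 0, q z * z ∂ν) := by ring

lemma tendsto_nat_mul_pgfEval_exp_sub_exp {γ : ℕ → ℝ} {g : ℕ → ℕ → ℝ} {lam r : ℝ}
    (hlam : 0 < lam) (hγ : ∀ k, 1 ≤ k → 0 < γ k) (hγtop : Tendsto γ atTop atTop)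
    (hlip : ∃ L : ℝ≥0, ∀ k : ℕ, 1 ≤ k → lam ≤ (k : ℝ) →
      LipschitzOnWith L (fun l => (k : ℝ) * γ k * (pgfEval (g k) (1 - l / k) - (1 - l / k)))
        (Icc 0 lam))
    (hlim : Tendsto (fun k : ℕ => (k : ℝ) * γ k * (pgfEval (g k) (1 - lam / k) - (1 - lam / k)))
      atTop (𝓝 r)) :
    Tendsto (fun k : ℕ => (k : ℝ) * (pgfEval (g k) (exp (-lam / k)) - exp (-lam / k)))
      atTop (𝓝 0) := by
  obtain ⟨L, hL⟩ := hlip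
  have hbig : ∀ᶠ k : ℕ in atTop, 1 ≤ k ∧ lam ≤ (k : ℝ) :=
    (eventually_ge_atTop 1).and (tendsto_natCast_atTop_atTop.eventually_ge_atTop lam)
  -- Condition (A) evaluated at `μ k = k (1 - e^{-λ/k}) ∈ [0, λ]` is `γ k` times the sequence.
  obtain ⟨C, hC⟩ := exists_eventually_abs_le_of_lipschitzOnWith (μ := fun k : ℕ =>
      k * (1 - exp (-lam / k))) (Metric.isBounded_Icc 0 lam) (right_mem_Icc.2 hlam.le)
    (hbig.mono fun k hk => hL k hk.1 hk.2) hlim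
    ((eventually_ge_atTop 1).mono fun k hk =>
      mul_one_sub_exp_neg_div_mem_Icc hlam.le (by exact_mod_cast hk))
  refine squeeze_zero_norm' ?_ (hγtop.const_div_atTop C)
  filter_upwards [hC, eventually_ge_atTop 1] with k hCk hk
  have hkpos : (0 : ℝ) < k := by exact_mod_cast hk
  have hT : 1 - k * (1 - exp (-lam / k)) / k = exp (-lam / k) := by field_simp; ring
  simp only [hT] at hCk
  rw [Real.norm_eq_abs, le_div_iff₀ (hγ k hk)]
  calc |k * (pgfEval (g k) (exp (-lam / k)) - exp (-lam / k))| * γ k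
      = |k * γ k * (pgfEval (g k) (exp (-lam / k)) - exp (-lam / k))| := by
        simp only [abs_mul, abs_of_pos (hγ k hk)]; ring
    _ ≤ C := hCk

section GridEstimate

variable {lam K₁ B : ℝ} {S : ℕ → ℝ} {φ : ℕ → ℕ → ℝ → ℝ} {f : ℝ → ℝ}

lemma eventually_one_le_and_le_and_half_le (hlam : 0 < lam)
    (hL : Tendsto (fun k : ℕ => k * (1 - S k)) atTop (𝓝 lam)) :
    ∀ᶠ k : ℕ in atTop, 1 ≤ k ∧ lam ≤ (k : ℝ) ∧ lam / 2 ≤ k * (1 - S k) :=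
  (eventually_ge_atTop 1).and ((tendsto_natCast_atTop_atTop.eventually_ge_atTop lam).and
    (hL.eventually_const_le (by linarith)))

lemma one_add_sq_mul_exp_neg_half_le (hlam : 0 < lam) {x : ℝ} (hx : 0 ≤ x) :
    (1 + x) ^ 2 * exp (-(lam / 2 * x)) ≤ max 1 (4 / lam) ^ 2 := by
  convert one_add_sq_mul_exp_neg_le (half_pos hlam) hx using 3
  ring

lemma pow_mul_one_add_sq_le (hlam : 0 < lam) {s k : ℝ} (hs : 0 ≤ s) (hk : 0 < k)
    (hhalf : lam / 2 ≤ k * (1 - s)) (j : ℕ) :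
    s ^ j * (1 + j / k) ^ 2 ≤ max 1 (4 / lam) ^ 2 :=
  calc s ^ j * (1 + j / k) ^ 2 ≤ (1 + j / k) ^ 2 * exp (-(lam / 2 * (j / k))) := by
        rw [mul_comm]; gcongr; exact pow_le_exp_neg_of_le_mul_one_sub hs hk hhalf j
    _ ≤ max 1 (4 / lam) ^ 2 := one_add_sq_mul_exp_neg_half_le hlam (by positivity)

lemma tendstoUniformly_pow_mul_sub_of_lipschitz (hlam : 0 < lam) (hK₁ : 0 ≤ K₁)
    (hS : ∀ k, 1 ≤ k → S k ∈ Icc 0 1)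
    (hL : Tendsto (fun k : ℕ => k * (1 - S k)) atTop (𝓝 lam))
    (hφ : ∀ k, 1 ≤ k → ∀ j u v, u ∈ Icc 0 1 → v ∈ Icc 0 1 →
      |φ k j u - φ k j v| ≤ K₁ * (1 + j / k) * (k * |u - v|)) :
    TendstoUniformly (fun k j => S k ^ j * (φ k j (S k) - φ k j (1 - lam / k))) 0 atTop := by
  refine tendstoUniformly_zero_of_abs_le
    (a := fun k : ℕ => K₁ * max 1 (4 / lam) ^ 2 * |k * (1 - S k) - lam|) ?_ ?_
  · simpa using (hL.sub_const lam).abs.const_mul (K₁ * max 1 (4 / lam) ^ 2)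
  filter_upwards [eventually_one_le_and_le_and_half_le hlam hL] with k ⟨hk, hklam, hhalf⟩ j
  have hkpos : (0 : ℝ) < k := by exact_mod_cast hk
  have hSk := hS k hk
  have hv : 1 - lam / k ∈ Icc 0 1 :=
    ⟨sub_nonneg.2 (div_le_one_of_le₀ hklam hkpos.le), sub_le_self _ (by positivity)⟩
  have hdist : (k : ℝ) * |S k - (1 - lam / k)| = |k * (1 - S k) - lam| := by
    rw [show (k : ℝ) * (1 - S k) - lam = k * ((1 - lam / k) - S k) by field_simp; ring,
      abs_mul, abs_of_pos hkpos, abs_sub_comm]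
  have hpow := pow_mul_one_add_sq_le hlam hSk.1 hkpos hhalf j
  have hx : 1 + (j : ℝ) / k ≤ (1 + j / k) ^ 2 := by
    nlinarith [show (0 : ℝ) ≤ j / k by positivity]
  calc |S k ^ j * (φ k j (S k) - φ k j (1 - lam / k))|
      = S k ^ j * |φ k j (S k) - φ k j (1 - lam / k)| := by
        rw [abs_mul, abs_of_nonneg (pow_nonneg hSk.1 j)]
    _ ≤ S k ^ j * (K₁ * (1 + j / k) * (k * |S k - (1 - lam / k)|)) := by
        gcongr
        · exact pow_nonneg hSk.1 j
        · exact hφ k hk j _ _ hSk hv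
    _ = K₁ * (S k ^ j * (1 + j / k)) * |k * (1 - S k) - lam| := by rw [hdist]; ring
    _ ≤ K₁ * max 1 (4 / lam) ^ 2 * |k * (1 - S k) - lam| := by
        gcongr; exact (mul_le_mul_of_nonneg_left hx (pow_nonneg hSk.1 j)).trans hpow

lemma tendstoUniformly_pow_mul_sub_of_local (hlam : 0 < lam) (hK₁ : 0 ≤ K₁)
    (hS : ∀ k, 1 ≤ k → S k ∈ Icc 0 1)
    (hL : Tendsto (fun k : ℕ => k * (1 - S k)) atTop (𝓝 lam))
    (hφ : ∀ k, 1 ≤ k → ∀ j u v, u ∈ Icc 0 1 → v ∈ Icc 0 1 →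
      |φ k j u - φ k j v| ≤ K₁ * (1 + j / k) * (k * |u - v|))
    (hφ1 : ∀ k, 1 ≤ k → ∀ j, φ k j 1 = 0) (hf : ∀ x, 0 ≤ x → |f x| ≤ B * (1 + x))
    (hloc : ∀ a > 0, ∀ ε > 0, ∀ᶠ k : ℕ in atTop, ∀ j : ℕ, (j : ℝ) / k ≤ a →
      |φ k j (1 - lam / k) - f (j / k)| < ε) :
    TendstoUniformly (fun k (j : ℕ) => S k ^ j * (φ k j (1 - lam / k) - f (j / k))) 0 atTop := by
  have hB : 0 ≤ B := by simpa using (abs_nonneg _).trans (hf 0 le_rfl)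
  refine tendstoUniformly_zero_of_local_of_decay (fun k (j : ℕ) => (j : ℝ) / k)
    (C := (K₁ * lam + B) * max 1 (4 / lam) ^ 2) (fun a ha ε hε => ?_) ?_
  · filter_upwards [hloc a ha ε hε, eventually_ge_atTop 1] with k hk hk1 j hj
    have hSk := hS k hk1
    rw [abs_mul, abs_of_nonneg (pow_nonneg hSk.1 j)]
    exact (mul_le_of_le_one_left (abs_nonneg _) (pow_le_one₀ hSk.1 hSk.2)).trans_lt (hk j hj)
  filter_upwards [eventually_one_le_and_le_and_half_le hlam hL] with k ⟨hk, hklam, hhalf⟩ j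
  have hkpos : (0 : ℝ) < k := by exact_mod_cast hk
  have hSk := hS k hk
  have hx : (0 : ℝ) ≤ j / k := by positivity
  have hv : 1 - lam / k ∈ Icc 0 1 :=
    ⟨sub_nonneg.2 (div_le_one_of_le₀ hklam hkpos.le), sub_le_self _ (by positivity)⟩
  have hφv : |φ k j (1 - lam / k)| ≤ K₁ * (1 + j / k) * lam := by
    have h := hφ k hk j _ 1 hv ⟨zero_le_one, le_rfl⟩
    rwa [hφ1 k hk j, sub_zero, sub_sub_cancel_left, abs_neg,
      abs_of_nonneg (div_nonneg hlam.le hkpos.le), mul_div_cancel₀ _ hkpos.ne'] at h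
  calc |S k ^ j * (φ k j (1 - lam / k) - f (j / k))| * (j / k)
      ≤ S k ^ j * (K₁ * (1 + j / k) * lam + B * (1 + j / k)) * (j / k) := by
        rw [abs_mul, abs_of_nonneg (pow_nonneg hSk.1 j)]
        gcongr
        · exact pow_nonneg hSk.1 j
        · exact (abs_sub _ _).trans (add_le_add hφv (hf _ hx))
    _ = (K₁ * lam + B) * (S k ^ j * ((1 + j / k) * (j / k))) := by ring
    _ ≤ (K₁ * lam + B) * (S k ^ j * (1 + j / k) ^ 2) := by
        gcongr
        · exact pow_nonneg hSk.1 j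
        · nlinarith
    _ ≤ (K₁ * lam + B) * max 1 (4 / lam) ^ 2 := by
        gcongr; exact pow_mul_one_add_sq_le hlam hSk.1 hkpos hhalf j

lemma tendstoUniformly_pow_sub_exp_mul (hlam : 0 < lam) (hS : ∀ k, 1 ≤ k → S k ∈ Icc 0 1)
    (hL : Tendsto (fun k : ℕ => k * (1 - S k)) atTop (𝓝 lam))
    (hD : Tendsto (fun k : ℕ => k * (S k - exp (-lam / k))) atTop (𝓝 0))
    (hf : ∀ x, 0 ≤ x → |f x| ≤ B * (1 + x)) :
    TendstoUniformly (fun k (j : ℕ) => (S k ^ j - exp (-lam * (j / k))) * f (j / k)) 0 atTop := by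
  have hB : 0 ≤ B := by simpa using (abs_nonneg _).trans (hf 0 le_rfl)
  refine tendstoUniformly_zero_of_abs_le (a := fun k : ℕ =>
    exp (lam / 2) * B * max 1 (4 / lam) ^ 2 * |k * (S k - exp (-lam / k))|) ?_ ?_
  · simpa using hD.abs.const_mul (exp (lam / 2) * B * max 1 (4 / lam) ^ 2)
  filter_upwards [eventually_one_le_and_le_and_half_le hlam hL] with k ⟨hk, _, hhalf⟩ j
  have hkpos : (0 : ℝ) < k := by exact_mod_cast hk
  have hSk := hS k hk
  have hx : (0 : ℝ) ≤ j / k := by positivity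
  set c := lam / 2 * (1 / k) with hc
  have hc' : c = lam / k / 2 := by rw [hc]; ring
  have hSc : S k ≤ exp (-c) := by
    have h := pow_le_exp_neg_of_le_mul_one_sub hSk.1 hkpos hhalf 1
    rwa [pow_one, Nat.cast_one] at h
  have hlamk : 0 ≤ lam / k := div_nonneg hlam.le hkpos.le
  have hTc : exp (-lam / k) ≤ exp (-c) := exp_le_exp.2 (by rw [hc', neg_div]; linarith)
  have hcle : exp c ≤ exp (lam / 2) := by
    gcongr
    rw [hc']
    gcongr
    exact div_le_self hlam.le (by exact_mod_cast hk)
  have hpow := abs_pow_sub_pow_le_of_le_exp_neg hSk.1 (exp_pos _).le hSc hTc j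
  have hTj : exp (-lam / k) ^ j = exp (-lam * (j / k)) := by rw [← exp_nat_mul]; ring_nf
  have hdecay := one_add_sq_mul_exp_neg_half_le hlam hx
  calc |(S k ^ j - exp (-lam * (j / k))) * f (j / k)|
      = |S k ^ j - exp (-lam / k) ^ j| * |f (j / k)| := by rw [hTj, abs_mul]
    _ ≤ |S k - exp (-lam / k)| * j * (exp c * exp (-(c * j))) * (B * (1 + j / k)) := by
        exact mul_le_mul hpow (hf _ hx) (abs_nonneg _) (by positivity)
    _ = exp c * B * (j / k * (1 + j / k) * exp (-(lam / 2 * (j / k))))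
          * |k * (S k - exp (-lam / k))| := by
        rw [abs_mul, abs_of_pos hkpos, hc]; field_simp
    _ ≤ exp (lam / 2) * B * max 1 (4 / lam) ^ 2 * |k * (S k - exp (-lam / k))| := by
        gcongr
        refine le_trans ?_ hdecay
        gcongr
        linarith

theorem tendstoUniformly_pow_mul_sub_exp_mul (hlam : 0 < lam) (hK₁ : 0 ≤ K₁)
    (hS : ∀ k, 1 ≤ k → S k ∈ Icc 0 1)
    (hD : Tendsto (fun k : ℕ => k * (S k - exp (-lam / k))) atTop (𝓝 0))
    (hφ : ∀ k, 1 ≤ k → ∀ j u v, u ∈ Icc 0 1 → v ∈ Icc 0 1 →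
      |φ k j u - φ k j v| ≤ K₁ * (1 + j / k) * (k * |u - v|))
    (hφ1 : ∀ k, 1 ≤ k → ∀ j, φ k j 1 = 0) (hf : ∀ x, 0 ≤ x → |f x| ≤ B * (1 + x))
    (hloc : ∀ a > 0, ∀ ε > 0, ∀ᶠ k : ℕ in atTop, ∀ j : ℕ, (j : ℝ) / k ≤ a →
      |φ k j (1 - lam / k) - f (j / k)| < ε) :
    TendstoUniformly (fun k (j : ℕ) => S k ^ j * φ k j (S k) - exp (-lam * (j / k)) * f (j / k))
      0 atTop := by
  have hL : Tendsto (fun k : ℕ => k * (1 - S k)) atTop (𝓝 lam) := by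
    convert (tendsto_nat_mul_one_sub_exp_neg_div lam).sub hD using 2 <;> ring
  convert ((tendstoUniformly_pow_mul_sub_of_lipschitz hlam hK₁ hS hL hφ).add
    (tendstoUniformly_pow_mul_sub_of_local hlam hK₁ hS hL hφ hφ1 hf hloc)).add
    (tendstoUniformly_pow_sub_exp_mul hlam hS hL hD hf) using 1
  · ext k j; simp only [Pi.add_apply]; ring
  · simp

end GridEstimate

theorem stmt11_general
    (ν : Measure ℝ)
    (β : ℝ → ℝ) (q : ℝ → ℝ → ℝ)
    (hβpos : ∀ x, 0 ≤ x → 0 ≤ β x)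
    (hqpos : ∀ x z, 0 ≤ x → 0 < z → 0 ≤ q x z)
    (hqint : ∀ x, 0 ≤ x → IntegrableOn (fun z => q x z * z) (Ioi 0) ν)
    (K : ℝ)
    (hgrowth : ∀ x, 0 ≤ x → β x + ∫ z in Ioi 0, q x z * z ∂ν ≤ K * (1 + x))
    (R : ℝ → ℝ)
    (F : ℝ → ℝ → ℝ)
    (hF : ∀ l x, 0 ≤ l → 0 ≤ x →
      F l x = -(β x) * l + ∫ z in Ioi 0, (Real.exp (-l * z) - 1) * q x z ∂ν)
    (γ : ℕ → ℝ) (hγpos : ∀ k, 1 ≤ k → 0 < γ k)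
    (hγtop : Tendsto γ atTop atTop)
    (gp : ℕ → ℕ → ℝ) (hgp : ∀ k, 1 ≤ k → IsPGF (gp k))
    (hp : ℕ → ℕ → ℕ → ℝ) (hhp : ∀ k i, 1 ≤ k → IsPGF (hp k i))
    -- condition (A)
    (condA1 : ∀ a : ℝ, 0 < a → ∃ L : NNReal, ∀ k : ℕ, 1 ≤ k → a ≤ (k : ℝ) →
      LipschitzOnWith L
        (fun l => (k : ℝ) * γ k * (pgfEval (gp k) (1 - l / k) - (1 - l / k)))
        (Icc 0 a))
    (condA2 : ∀ l : ℝ, 0 ≤ l →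
      Tendsto (fun k : ℕ => (k : ℝ) * γ k * (pgfEval (gp k) (1 - l / k) - (1 - l / k)))
        atTop (nhds (R l)))
    -- condition (B)
    (condB : ∀ a₁ a₂ : ℝ, 0 < a₁ → 0 < a₂ →
      TendstoUniformlyOn
        (fun (k : ℕ) (lx : ℝ × ℝ) =>
          γ k * (pgfEval (hp k ⌊(k : ℝ) * lx.2⌋₊) (1 - lx.1 / k) - 1))
        (fun lx => F lx.1 lx.2) atTop (Icc 0 a₁ ×ˢ Icc 0 a₂))
    -- condition (C)
    (K₁ : ℝ) (hK₁ : 0 < K₁)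
    (condC : ∀ k : ℕ, 1 ≤ k → ∀ x : ℝ, 0 ≤ x →
      ENNReal.ofReal (γ k / k) * pgfMean (hp k ⌊(k : ℝ) * x⌋₊)
        ≤ ENNReal.ofReal (K₁ * (1 + x)))
    (lam : ℝ) (hlam : 0 < lam) :
    ∀ ε > (0 : ℝ), ∀ᶠ k : ℕ in atTop, ∀ j : ℕ,
      |γ k * (pgfEval (gp k) (Real.exp (-lam / k))) ^ j
          * (pgfEval (hp k j) (pgfEval (gp k) (Real.exp (-lam / k))) - 1)
        - Real.exp (-lam * ((j : ℝ) / k)) * F lam ((j : ℝ) / k)| < ε := by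
  set φ : ℕ → ℕ → ℝ → ℝ := fun k j u => γ k * (pgfEval (hp k j) u - 1) with hφdef
  have hS (k : ℕ) (hk : 1 ≤ k) : pgfEval (gp k) (exp (-lam / k)) ∈ Icc 0 1 :=
    (hgp k hk).pgfEval_mem_Icc ⟨(exp_pos _).le, exp_le_one_iff.2
      (div_nonpos_of_nonpos_of_nonneg (neg_nonpos.2 hlam.le) k.cast_nonneg)⟩
  have hφ (k : ℕ) (hk : 1 ≤ k) (j : ℕ) (u v : ℝ) (hu : u ∈ Icc 0 1) (hv : v ∈ Icc 0 1) :
      |φ k j u - φ k j v| ≤ K₁ * (1 + j / k) * (k * |u - v|) := by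
    have hmean := condC k hk (j / k) (by positivity)
    rw [floor_natCast_mul_natCast_div (by omega) j] at hmean
    exact (hhp k j hk).abs_mul_pgfEval_sub_one_sub_le (hγpos k hk).le (Nat.cast_pos.2 hk)
      (by positivity) hmean hu hv
  have hφ1 (k : ℕ) (hk : 1 ≤ k) (j : ℕ) : φ k j 1 = 0 := by
    simp [hφdef, (hhp k j hk).pgfEval_one]
  have hFbound (x : ℝ) (hx : 0 ≤ x) : |F lam x| ≤ lam * K * (1 + x) := by
    rw [hF lam x hlam.le hx, mul_assoc]
    exact (abs_neg_mul_add_integral_exp_neg_sub_one_le hlam.le (hβpos x hx) (hqpos x · hx)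
      (hqint x hx)).trans (mul_le_mul_of_nonneg_left (hgrowth x hx) hlam.le)
  have hloc : ∀ a > 0, ∀ ε > 0, ∀ᶠ k : ℕ in atTop, ∀ j : ℕ, (j : ℝ) / k ≤ a →
      |φ k j (1 - lam / k) - F lam (j / k)| < ε := by
    intro a ha ε hε
    filter_upwards [Metric.tendstoUniformlyOn_iff.1 (condB lam a hlam ha) ε hε,
      eventually_ge_atTop 1] with k hk hk1 j hj
    have h := hk (lam, j / k) ⟨⟨hlam.le, le_rfl⟩, ⟨by positivity, hj⟩⟩
    rwa [dist_comm, Real.dist_eq, floor_natCast_mul_natCast_div (by omega) j] at h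
  have hD := tendsto_nat_mul_pgfEval_exp_sub_exp hlam hγpos hγtop (condA1 lam hlam)
    (condA2 lam hlam.le)
  intro ε hε
  filter_upwards [Metric.tendstoUniformly_iff.1 (tendstoUniformly_pow_mul_sub_exp_mul hlam hK₁.le
    hS hD hφ hφ1 hFbound hloc) ε hε] with k hk j
  have h := hk j
  rw [Pi.zero_apply, dist_zero_left, Real.norm_eq_abs] at h
  convert h using 3
  rw [hφdef]; ring

/-- under conditions (A), (B), (C) and the growth condition, with
`B_k(λ,x) = γ_k g_k(e^{−λ/k})^{kx} [h_k^{(kx)}(g_k(e^{−λ/k})) − 1]` for `x = j/k ∈ E_k`,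
one has `lim_{k→∞} sup_{x ∈ E_k} |B_k(λ,x) − e^{−λx} F(λ,x)| = 0` for each `λ > 0`. -/
theorem stmt11
    (b c : ℝ) (hc : 0 ≤ c)
    (m : Measure ℝ) (hm : IntegrableOn (fun z => min z (z ^ 2)) (Ioi 0) m)
    (ν : Measure ℝ) [SigmaFinite ν]
    (β : ℝ → ℝ) (q : ℝ → ℝ → ℝ)
    (hβmeas : Measurable β) (hqmeas : Measurable (Function.uncurry q))
    (hβpos : ∀ x, 0 ≤ x → 0 ≤ β x)
    (hqpos : ∀ x z, 0 ≤ x → 0 < z → 0 ≤ q x z)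
    (hqint : ∀ x, 0 ≤ x → IntegrableOn (fun z => q x z * z) (Ioi 0) ν)
    (K : ℝ) (hK : 0 ≤ K)
    (hgrowth : ∀ x, 0 ≤ x → β x + ∫ z in Ioi 0, q x z * z ∂ν ≤ K * (1 + x))
    (R : ℝ → ℝ)
    (hR : ∀ l, 0 ≤ l →
      R l = b * l + c * l ^ 2 + ∫ z in Ioi 0, (Real.exp (-l * z) - 1 + l * z) ∂m)
    (F : ℝ → ℝ → ℝ)
    (hF : ∀ l x, 0 ≤ l → 0 ≤ x →
      F l x = -(β x) * l + ∫ z in Ioi 0, (Real.exp (-l * z) - 1) * q x z ∂ν)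
    (γ : ℕ → ℝ) (hγpos : ∀ k, 1 ≤ k → 0 < γ k) (hγmono : Monotone γ)
    (hγtop : Tendsto γ atTop atTop)
    (gp : ℕ → ℕ → ℝ) (hgp : ∀ k, 1 ≤ k → IsPGF (gp k))
    (hp : ℕ → ℕ → ℕ → ℝ) (hhp : ∀ k i, 1 ≤ k → IsPGF (hp k i))
    -- condition (A)
    (condA1 : ∀ a : ℝ, 0 < a → ∃ L : NNReal, ∀ k : ℕ, 1 ≤ k → a ≤ (k : ℝ) →
      LipschitzOnWith L
        (fun l => (k : ℝ) * γ k * (pgfEval (gp k) (1 - l / k) - (1 - l / k)))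
        (Icc 0 a))
    (condA2 : ∀ l : ℝ, 0 ≤ l →
      Tendsto (fun k : ℕ => (k : ℝ) * γ k * (pgfEval (gp k) (1 - l / k) - (1 - l / k)))
        atTop (nhds (R l)))
    -- condition (B)
    (condB : ∀ a₁ a₂ : ℝ, 0 < a₁ → 0 < a₂ →
      TendstoUniformlyOn
        (fun (k : ℕ) (lx : ℝ × ℝ) =>
          γ k * (pgfEval (hp k ⌊(k : ℝ) * lx.2⌋₊) (1 - lx.1 / k) - 1))
        (fun lx => F lx.1 lx.2) atTop (Icc 0 a₁ ×ˢ Icc 0 a₂))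
    -- condition (C)
    (K₁ : ℝ) (hK₁ : 0 < K₁)
    (condC : ∀ k : ℕ, 1 ≤ k → ∀ x : ℝ, 0 ≤ x →
      ENNReal.ofReal (γ k / k) * pgfMean (hp k ⌊(k : ℝ) * x⌋₊)
        ≤ ENNReal.ofReal (K₁ * (1 + x)))
    (lam : ℝ) (hlam : 0 < lam) :
    ∀ ε > (0 : ℝ), ∀ᶠ k : ℕ in atTop, ∀ j : ℕ,
      |γ k * (pgfEval (gp k) (Real.exp (-lam / k))) ^ j
          * (pgfEval (hp k j) (pgfEval (gp k) (Real.exp (-lam / k))) - 1)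
        - Real.exp (-lam * ((j : ℝ) / k)) * F lam ((j : ℝ) / k)| < ε :=
  stmt11_general ν β q hβpos hqpos hqint K hgrowth R F hF γ hγpos hγtop gp hgp hp hhp condA1 condA2
    condB K₁ hK₁ condC lam hlam
end

section
/- Let (Ω, ℱ, P) be a probability space with a filtration (𝒢_n)_{n≥0}, let (X_n)_{n≥0} be a (𝒢_n)-adapted process with values in [0,∞), and let κ be a Markov kernel on [0,∞) such that E[f(X_{n+1}) | 𝒢_n] = ∫ f(y) κ(X_n, dy) a.s. for every bounded Borel f and every n. Fix λ > 0 and γ > 0, and for μ > 0 set A_μ(x) = γ ( ∫ e^{−μy} κ(x,dy) − e^{−μx} ); assume C := sup_{x ≥ 0} max( |A_λ(x)|, |A_{2λ}(x)| ) < ∞. Then for all bounded (𝒢_n)-stopping times σ ≤ σ′, E[ ( e^{−λ X_{σ′}} − e^{−λ X_σ} )² ] ≤ 3 (C/γ) · E[σ′ − σ]. -/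
/-!
Write `Y = e^{-λX}`, so that `Y² = e^{-2λX}` and
`(Y_{σ'} - Y_σ)² = (Y²_{σ'} - Y²_σ) - 2 Y_σ (Y_{σ'} - Y_σ)`. Both terms on the right are of the
form `W_σ (Z_{σ'} - Z_σ)` with `|W| ≤ 1` adapted, and telescope into
`∑ₙ 1{σ ≤ n < σ'} W_{σ ∧ n} (Z_{n+1} - Z_n)`. Conditioning each summand on `𝒢 n` replaces the
increment by the drift `E[Z_{n+1} - Z_n | 𝒢 n] = A_μ(X_n) / γ`, which is at most `C / γ` in absolute
value, and `∑ₙ P(σ ≤ n < σ') = E[σ' - σ]`.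
-/

open MeasureTheory ProbabilityTheory Set

lemma Finset.sum_range_ite_le_lt_sub {M : Type*} [AddCommGroup M] (u : ℕ → M) {a b N : ℕ}
    (hab : a ≤ b) (hbN : b ≤ N) :
    ∑ n ∈ Finset.range N, (if a ≤ n ∧ n < b then u (n + 1) - u n else 0) = u b - u a := by
  have hIco : Finset.range N ∩ Finset.Ico a b = Finset.Ico a b :=
    Finset.inter_eq_right.2 fun n hn => Finset.mem_range.2 ((Finset.mem_Ico.1 hn).2.trans_le hbN)
  simp_rw [← Finset.mem_Ico, Finset.sum_ite_mem, hIco, Finset.sum_Ico_sub u hab]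

lemma Finset.sum_range_ite_le_lt_one {a b N : ℕ} (hab : a ≤ b) (hbN : b ≤ N) :
    ∑ n ∈ Finset.range N, (if a ≤ n ∧ n < b then (1 : ℝ) else 0) = b - a := by
  rw [← Finset.sum_range_ite_le_lt_sub (fun n => (n : ℝ)) hab hbN]
  push_cast
  simp

lemma abs_exp_neg_mul_le_one {c x : ℝ} (hc : 0 ≤ c) (hx : 0 ≤ x) : |Real.exp (-c * x)| ≤ 1 := by
  rw [abs_of_pos (Real.exp_pos _), Real.exp_le_one_iff, neg_mul, neg_nonpos]
  exact mul_nonneg hc hx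

theorem abs_integral_mul_le_of_abs_condExp_le {Ω : Type*} {m m0 : MeasurableSpace Ω}
    {μ : Measure Ω} [IsFiniteMeasure μ] (hm : m ≤ m0) {ψ Z : Ω → ℝ} {B D : ℝ}
    (hψ : StronglyMeasurable[m] ψ) (hψB : ∀ ω, |ψ ω| ≤ B) (hZ : Integrable Z μ)
    (hD : ∀ᵐ ω ∂μ, |μ[Z|m] ω| ≤ D) :
    |∫ ω, ψ ω * Z ω ∂μ| ≤ D * ∫ ω, |ψ ω| ∂μ := by
  have hψB' : ∀ᵐ ω ∂μ, ‖ψ ω‖ ≤ B := ae_of_all _ hψB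
  have hψm : AEStronglyMeasurable ψ μ := (hψ.mono hm).aestronglyMeasurable
  have hpull : μ[fun ω => ψ ω * Z ω|m] =ᵐ[μ] fun ω => ψ ω * μ[Z|m] ω :=
    condExp_stronglyMeasurable_mul_of_bound hm hψ hZ B hψB'
  calc |∫ ω, ψ ω * Z ω ∂μ| = |∫ ω, ψ ω * μ[Z|m] ω ∂μ| := by
        rw [← integral_condExp hm, integral_congr_ae hpull]
    _ ≤ ∫ ω, |ψ ω * μ[Z|m] ω| ∂μ := abs_integral_le_integral_abs
    _ ≤ ∫ ω, D * |ψ ω| ∂μ := by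
        refine integral_mono_ae (integrable_condExp.bdd_mul hψm hψB').abs
          ((Integrable.of_bound hψm B hψB').abs.const_mul D) ?_
        filter_upwards [hD] with ω hω
        rw [abs_mul, mul_comm D]
        exact mul_le_mul_of_nonneg_left hω (abs_nonneg _)
    _ = D * ∫ ω, |ψ ω| ∂μ := integral_const_mul D _

namespace MeasureTheory

variable {Ω : Type*} {m0 : MeasurableSpace Ω} {μ : Measure Ω} {𝒢 : Filtration ℕ m0}

theorem Adapted.integrable_of_abs_le [IsFiniteMeasure μ] {Z : ℕ → Ω → ℝ} (hZ : Adapted 𝒢 Z)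
    {B : ℝ} (hB : ∀ n ω, |Z n ω| ≤ B) (n : ℕ) : Integrable (Z n) μ :=
  Integrable.of_bound ((hZ n).mono (𝒢.le n) le_rfl).aestronglyMeasurable B (ae_of_all _ (hB n))

theorem Adapted.stronglyMeasurable_stopped_min {W : ℕ → Ω → ℝ} (hW : Adapted 𝒢 W) {σ : Ω → ℕ}
    (hσ : IsStoppingTime 𝒢 (fun ω => (σ ω : WithTop ℕ))) (n : ℕ) :
    StronglyMeasurable[𝒢 n] fun ω => W (min (σ ω) n) ω := by
  convert stronglyMeasurable_stoppedValue_of_le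
    hW.stronglyAdapted.isStronglyProgressive_of_discrete (hσ.min_const n) fun _ => min_le_right _ _
    using 2 with ω
  simp only [stoppedValue, ← WithTop.coe_natCast, ← WithTop.coe_min]
  rfl

theorem Adapted.integrable_stopped_of_le [IsFiniteMeasure μ] {Z : ℕ → Ω → ℝ} (hZ : Adapted 𝒢 Z)
    {B : ℝ} (hB : ∀ n ω, |Z n ω| ≤ B) {τ : Ω → ℕ}
    (hτ : IsStoppingTime 𝒢 (fun ω => (τ ω : WithTop ℕ))) {N : ℕ} (hτN : ∀ ω, τ ω ≤ N) :
    Integrable (fun ω => Z (τ ω) ω) μ := by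
  have h := ((hZ.stronglyMeasurable_stopped_min hτ N).mono (𝒢.le N)).aestronglyMeasurable (μ := μ)
  simp only [min_eq_left (hτN _)] at h
  exact Integrable.of_bound h B (ae_of_all _ fun ω => hB _ ω)

theorem IsStoppingTime.measurableSet_le_lt {σ σ' : Ω → ℕ}
    (hσ : IsStoppingTime 𝒢 (fun ω => (σ ω : WithTop ℕ)))
    (hσ' : IsStoppingTime 𝒢 (fun ω => (σ' ω : WithTop ℕ))) (n : ℕ) :
    MeasurableSet[𝒢 n] {ω | σ ω ≤ n ∧ n < σ' ω} := by
  have h := (hσ.measurableSet_le n).inter (hσ'.measurableSet_le n).compl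
  simpa [Set.ofPred_and, Set.compl_ofPred] using h

/-- `W_σ 1{σ ≤ n < σ'}`, written with `σ ∧ n` in place of `σ` so that it is `𝒢 n`-measurable. -/
noncomputable def stoppedWeight (W : ℕ → Ω → ℝ) (σ σ' : Ω → ℕ) (n : ℕ) : Ω → ℝ :=
  {ω | σ ω ≤ n ∧ n < σ' ω}.indicator fun ω => W (min (σ ω) n) ω

theorem Adapted.stronglyMeasurable_stoppedWeight {W : ℕ → Ω → ℝ} (hW : Adapted 𝒢 W)
    {σ σ' : Ω → ℕ} (hσ : IsStoppingTime 𝒢 (fun ω => (σ ω : WithTop ℕ)))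
    (hσ' : IsStoppingTime 𝒢 (fun ω => (σ' ω : WithTop ℕ))) (n : ℕ) :
    StronglyMeasurable[𝒢 n] (stoppedWeight W σ σ' n) :=
  (hW.stronglyMeasurable_stopped_min hσ n).indicator (hσ.measurableSet_le_lt hσ' n)

theorem abs_stoppedWeight_le {W : ℕ → Ω → ℝ} (hW1 : ∀ n ω, |W n ω| ≤ 1) (σ σ' : Ω → ℕ) (n : ℕ)
    (ω : Ω) : |stoppedWeight W σ σ' n ω| ≤ {ω | σ ω ≤ n ∧ n < σ' ω}.indicator 1 ω := by
  by_cases h : σ ω ≤ n ∧ n < σ' ω <;> simp [stoppedWeight, h, hW1]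

theorem sum_stoppedWeight_mul_sub (W Z : ℕ → Ω → ℝ) {σ σ' : Ω → ℕ} {N : ℕ} {ω : Ω}
    (hle : σ ω ≤ σ' ω) (hbdd : σ' ω ≤ N) :
    ∑ n ∈ Finset.range N, stoppedWeight W σ σ' n ω * (Z (n + 1) ω - Z n ω)
      = W (σ ω) ω * (Z (σ' ω) ω - Z (σ ω) ω) := by
  rw [← Finset.sum_range_ite_le_lt_sub (Z · ω) hle hbdd, Finset.mul_sum]
  refine Finset.sum_congr rfl fun n _ => ?_
  by_cases h : σ ω ≤ n ∧ n < σ' ω <;> simp [stoppedWeight, h]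

theorem abs_integral_stopped_mul_sub_le [IsFiniteMeasure μ] [NeZero μ] {Z W : ℕ → Ω → ℝ} {D : ℝ}
    (hZ : ∀ n, Integrable (Z n) μ) (hD : ∀ n, ∀ᵐ ω ∂μ, |μ[Z (n + 1) - Z n|𝒢 n] ω| ≤ D)
    (hW : Adapted 𝒢 W) (hW1 : ∀ n ω, |W n ω| ≤ 1) {σ σ' : Ω → ℕ}
    (hσ : IsStoppingTime 𝒢 (fun ω => (σ ω : WithTop ℕ)))
    (hσ' : IsStoppingTime 𝒢 (fun ω => (σ' ω : WithTop ℕ)))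
    (hle : ∀ ω, σ ω ≤ σ' ω) {N : ℕ} (hbdd : ∀ ω, σ' ω ≤ N) :
    |∫ ω, W (σ ω) ω * (Z (σ' ω) ω - Z (σ ω) ω) ∂μ| ≤ D * ∫ ω, ((σ' ω : ℝ) - σ ω) ∂μ := by
  set S : ℕ → Set Ω := fun n => {ω | σ ω ≤ n ∧ n < σ' ω}
  set ψ : ℕ → Ω → ℝ := stoppedWeight W σ σ'
  have hD0 : 0 ≤ D := let ⟨_, h⟩ := (hD 0).exists; (abs_nonneg _).trans h
  have hψ := hW.stronglyMeasurable_stoppedWeight hσ hσ'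
  have hψ1 : ∀ n ω, |ψ n ω| ≤ 1 := fun n ω =>
    (abs_stoppedWeight_le hW1 σ σ' n ω).trans (Set.indicator_le_self' (fun _ _ => zero_le_one) ω)
  have hS : ∀ n, Integrable ((S n).indicator (1 : Ω → ℝ)) μ := fun n =>
    (integrable_const 1).indicator (𝒢.le n _ (hσ.measurableSet_le_lt hσ' n))
  have hterm : ∀ n, |∫ ω, ψ n ω * (Z (n + 1) - Z n) ω ∂μ| ≤ D * ∫ ω, (S n).indicator 1 ω ∂μ := by
    intro n
    refine (abs_integral_mul_le_of_abs_condExp_le (𝒢.le n) (hψ n) (hψ1 n) ((hZ _).sub (hZ n))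
      (hD n)).trans (mul_le_mul_of_nonneg_left (integral_mono ?_ (hS n) ?_) hD0)
    · exact (Integrable.of_bound ((hψ n).mono (𝒢.le n)).aestronglyMeasurable 1
        (ae_of_all _ (hψ1 n))).abs
    · exact abs_stoppedWeight_le hW1 σ σ' n
  have hcount : ∀ ω, ∑ n ∈ Finset.range N, (S n).indicator 1 ω = (σ' ω : ℝ) - σ ω := by
    intro ω
    simp only [← Finset.sum_range_ite_le_lt_one (hle ω) (hbdd ω), S, Set.indicator_apply,
      Set.mem_ofPred_eq, Pi.one_apply]
  have hint : ∀ n, Integrable (fun ω => ψ n ω * (Z (n + 1) - Z n) ω) μ := fun n =>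
    ((hZ _).sub (hZ n)).bdd_mul ((hψ n).mono (𝒢.le n)).aestronglyMeasurable (ae_of_all _ (hψ1 n))
  calc |∫ ω, W (σ ω) ω * (Z (σ' ω) ω - Z (σ ω) ω) ∂μ|
      = |∑ n ∈ Finset.range N, ∫ ω, ψ n ω * (Z (n + 1) - Z n) ω ∂μ| := by
        rw [← integral_finsetSum _ fun n _ => hint n]
        exact congrArg _ (integral_congr_ae (ae_of_all _ fun ω =>
          (sum_stoppedWeight_mul_sub W Z (hle ω) (hbdd ω)).symm))
    _ ≤ ∑ n ∈ Finset.range N, |∫ ω, ψ n ω * (Z (n + 1) - Z n) ω ∂μ| :=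
        Finset.abs_sum_le_sum_abs _ _
    _ ≤ ∑ n ∈ Finset.range N, D * ∫ ω, (S n).indicator 1 ω ∂μ :=
        Finset.sum_le_sum fun n _ => hterm n
    _ = D * ∫ ω, ((σ' ω : ℝ) - σ ω) ∂μ := by
        rw [← Finset.mul_sum, ← integral_finsetSum _ fun n _ => hS n,
          integral_congr_ae (ae_of_all _ hcount)]

theorem integral_sq_stopped_sub_le [IsFiniteMeasure μ] [NeZero μ] {Y : ℕ → Ω → ℝ} {D₁ D₂ : ℝ}
    (hY : Adapted 𝒢 Y) (hY1 : ∀ n ω, |Y n ω| ≤ 1)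
    (hD₁ : ∀ n, ∀ᵐ ω ∂μ, |μ[Y (n + 1) - Y n|𝒢 n] ω| ≤ D₁)
    (hD₂ : ∀ n, ∀ᵐ ω ∂μ, |μ[Y (n + 1) ^ 2 - Y n ^ 2|𝒢 n] ω| ≤ D₂) {σ σ' : Ω → ℕ}
    (hσ : IsStoppingTime 𝒢 (fun ω => (σ ω : WithTop ℕ)))
    (hσ' : IsStoppingTime 𝒢 (fun ω => (σ' ω : WithTop ℕ)))
    (hle : ∀ ω, σ ω ≤ σ' ω) {N : ℕ} (hbdd : ∀ ω, σ' ω ≤ N) :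
    ∫ ω, (Y (σ' ω) ω - Y (σ ω) ω) ^ 2 ∂μ ≤ (D₂ + 2 * D₁) * ∫ ω, ((σ' ω : ℝ) - σ ω) ∂μ := by
  have hσN : ∀ ω, σ ω ≤ N := fun ω => (hle ω).trans (hbdd ω)
  have hY2 : Adapted 𝒢 fun n => Y n ^ 2 := fun n => (hY n).pow_const 2
  have hY21 : ∀ n ω, |Y n ω ^ 2| ≤ 1 := fun n ω => by
    rw [abs_pow]
    exact pow_le_one₀ (abs_nonneg _) (hY1 n ω)
  have h₂ := abs_integral_stopped_mul_sub_le (hY2.integrable_of_abs_le hY21) hD₂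
    (W := fun _ _ => 1) (fun _ => measurable_const) (fun _ _ => by simp) hσ hσ' hle hbdd
  have h₁ := abs_integral_stopped_mul_sub_le (hY.integrable_of_abs_le hY1) hD₁ hY hY1
    hσ hσ' hle hbdd
  simp only [one_mul, Pi.pow_apply] at h₂
  have hi₂ : Integrable (fun ω => Y (σ' ω) ω ^ 2 - Y (σ ω) ω ^ 2) μ :=
    (hY2.integrable_stopped_of_le hY21 hσ' hbdd).sub (hY2.integrable_stopped_of_le hY21 hσ hσN)
  have hi₁ : Integrable (fun ω => Y (σ ω) ω * (Y (σ' ω) ω - Y (σ ω) ω)) μ :=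
    ((hY.integrable_stopped_of_le hY1 hσ' hbdd).sub
      (hY.integrable_stopped_of_le hY1 hσ hσN)).bdd_mul
      (hY.integrable_stopped_of_le hY1 hσ hσN).aestronglyMeasurable (ae_of_all _ fun ω => hY1 _ ω)
  calc ∫ ω, (Y (σ' ω) ω - Y (σ ω) ω) ^ 2 ∂μ
      = ∫ ω, (Y (σ' ω) ω ^ 2 - Y (σ ω) ω ^ 2) ∂μ
        - 2 * ∫ ω, Y (σ ω) ω * (Y (σ' ω) ω - Y (σ ω) ω) ∂μ := by
        rw [← integral_const_mul, ← integral_sub hi₂ (hi₁.const_mul 2)]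
        exact integral_congr_ae (ae_of_all _ fun ω => by ring)
    _ ≤ (D₂ + 2 * D₁) * ∫ ω, ((σ' ω : ℝ) - σ ω) ∂μ := by
        linarith [(abs_le.1 h₂).2, (abs_le.1 h₁).1]

end MeasureTheory

def IsMarkovChain {Ω : Type*} {m0 : MeasurableSpace Ω} (μ : Measure Ω) (𝒢 : Filtration ℕ m0)
    (X : ℕ → Ω → ℝ) (κ : Kernel ℝ ℝ) : Prop :=
  ∀ f : ℝ → ℝ, Measurable f → (∃ C, ∀ x, |f x| ≤ C) → ∀ n,
    μ[fun ω => f (X (n + 1) ω)|𝒢 n] =ᵐ[μ] fun ω => ∫ y, f y ∂(κ (X n ω))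

namespace IsMarkovChain

variable {Ω : Type*} {m0 : MeasurableSpace Ω} {μ : Measure Ω} {𝒢 : Filtration ℕ m0}
  {X : ℕ → Ω → ℝ} {κ : Kernel ℝ ℝ}

theorem ae_kernel_nonneg [IsFiniteKernel κ] (hX : IsMarkovChain μ 𝒢 X κ)
    (hX0 : ∀ n ω, 0 ≤ X n ω) (n : ℕ) : ∀ᵐ ω ∂μ, ∀ᵐ y ∂κ (X n ω), 0 ≤ y := by
  have h := hX ((Iio 0).indicator 1) (measurable_const.indicator measurableSet_Iio)
    ⟨1, fun x => by by_cases hx : x < 0 <;> simp [hx]⟩ n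
  have hzero : (fun ω => (Iio 0).indicator (1 : ℝ → ℝ) (X (n + 1) ω)) = 0 :=
    funext fun ω => by simp [hX0]
  rw [hzero, condExp_zero] at h
  filter_upwards [h] with ω hω
  rw [Pi.zero_apply, integral_indicator_one measurableSet_Iio, eq_comm,
    measureReal_eq_zero_iff] at hω
  exact (measure_eq_zero_iff_ae_notMem.1 hω).mono fun y hy => not_lt.1 hy

/- The Markov property only covers bounded `f`, while `e^{-cy}` is unbounded on `ℝ`: apply it to
`f (max y 0)` and use that `κ (X n ω)` is carried by `[0, ∞)`. -/
theorem condExp_ae_eq_integral [IsFiniteKernel κ] (hX : IsMarkovChain μ 𝒢 X κ)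
    (hX0 : ∀ n ω, 0 ≤ X n ω) {f : ℝ → ℝ} (hf : Measurable f) {C : ℝ}
    (hfC : ∀ x, 0 ≤ x → |f x| ≤ C) (n : ℕ) :
    μ[fun ω => f (X (n + 1) ω)|𝒢 n] =ᵐ[μ] fun ω => ∫ y, f y ∂(κ (X n ω)) := by
  have h := hX (fun y => f (max y 0)) (hf.comp (measurable_id.max measurable_const))
    ⟨C, fun x => hfC _ (le_max_right _ _)⟩ n
  simp only [max_eq_left (hX0 _ _)] at h
  filter_upwards [h, hX.ae_kernel_nonneg hX0 n] with ω hω hκ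
  rw [hω]
  exact integral_congr_ae (hκ.mono fun y hy => by simp only [max_eq_left hy])

theorem abs_condExp_exp_sub_le [IsFiniteMeasure μ] [IsFiniteKernel κ]
    (hX : IsMarkovChain μ 𝒢 X κ) (hXa : Adapted 𝒢 X) (hX0 : ∀ n ω, 0 ≤ X n ω) {c D : ℝ}
    (hc : 0 ≤ c) (hD : ∀ x, 0 ≤ x → |∫ y, Real.exp (-c * y) ∂(κ x) - Real.exp (-c * x)| ≤ D)
    (n : ℕ) :
    ∀ᵐ ω ∂μ, |μ[(fun ω => Real.exp (-c * X (n + 1) ω)) - fun ω => Real.exp (-c * X n ω)|𝒢 n] ω|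
      ≤ D := by
  have hZa : Adapted 𝒢 fun k ω => Real.exp (-c * X k ω) := fun k => ((hXa k).const_mul _).exp
  have hZi := hZa.integrable_of_abs_le (μ := μ) fun k ω => abs_exp_neg_mul_le_one hc (hX0 k ω)
  have hK := hX.condExp_ae_eq_integral hX0 (f := fun y => Real.exp (-c * y)) (by fun_prop)
    (fun x hx => abs_exp_neg_mul_le_one hc hx) n
  filter_upwards [condExp_sub (hZi (n + 1)) (hZi n) (𝒢 n), hK] with ω hsub hω
  rw [hsub, Pi.sub_apply, hω, condExp_of_stronglyMeasurable (𝒢.le n) (hZa n).stronglyMeasurable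
    (hZi n)]
  exact hD _ (hX0 n ω)

end IsMarkovChain

/-- oscillation estimate for a `[0,∞)`-valued Markov chain. If
`A_μ(x) = γ(∫ e^{−μy} κ(x,dy) − e^{−μx})` satisfies `|A_λ(x)| ≤ C` and `|A_{2λ}(x)| ≤ C`
for all `x ≥ 0`, then for bounded stopping times `σ ≤ σ′`,
`E[(e^{−λX_{σ′}} − e^{−λX_σ})²] ≤ 3 (C/γ) E[σ′ − σ]`. -/
theorem stmt14 {Ω : Type*} {m0 : MeasurableSpace Ω} (μ : Measure Ω) [IsProbabilityMeasure μ]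
    (𝒢 : Filtration ℕ m0) (X : ℕ → Ω → ℝ) (hadapt : Adapted 𝒢 X)
    (hXpos : ∀ n ω, 0 ≤ X n ω)
    (κ : ProbabilityTheory.Kernel ℝ ℝ) [ProbabilityTheory.IsMarkovKernel κ]
    (hMarkov : ∀ f : ℝ → ℝ, Measurable f → (∃ C, ∀ x, |f x| ≤ C) → ∀ n,
      μ[fun ω => f (X (n + 1) ω)|𝒢 n] =ᵐ[μ] fun ω => ∫ y, f y ∂(κ (X n ω)))
    (lam γ : ℝ) (hlam : 0 < lam) (hγ : 0 < γ)
    (C : ℝ)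
    (hC : ∀ x : ℝ, 0 ≤ x →
      |γ * ((∫ y, Real.exp (-lam * y) ∂(κ x)) - Real.exp (-lam * x))| ≤ C ∧
      |γ * ((∫ y, Real.exp (-(2 * lam) * y) ∂(κ x)) - Real.exp (-(2 * lam) * x))| ≤ C)
    (σ σ' : Ω → ℕ) (hσ : IsStoppingTime 𝒢 (fun ω => (σ ω : WithTop ℕ)))
    (hσ' : IsStoppingTime 𝒢 (fun ω => (σ' ω : WithTop ℕ)))
    (hle : ∀ ω, σ ω ≤ σ' ω) (N : ℕ) (hbdd : ∀ ω, σ' ω ≤ N) :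
    ∫ ω, (Real.exp (-lam * X (σ' ω) ω) - Real.exp (-lam * X (σ ω) ω)) ^ 2 ∂μ
      ≤ 3 * (C / γ) * ∫ ω, ((σ' ω : ℝ) - (σ ω : ℝ)) ∂μ := by
  have hX : IsMarkovChain μ 𝒢 X κ := hMarkov
  have hdiv : ∀ a : ℝ, |γ * a| ≤ C → |a| ≤ C / γ := fun a h => by
    rwa [le_div_iff₀ hγ, mul_comm, ← abs_of_pos hγ, ← abs_mul]
  set Y : ℕ → Ω → ℝ := fun n ω => Real.exp (-lam * X n ω)
  have hY2 : ∀ n, Y n ^ 2 = fun ω => Real.exp (-(2 * lam) * X n ω) := fun n => by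
    funext ω
    simp only [Y, Pi.pow_apply, sq, ← Real.exp_add]
    ring_nf
  have hD₁ := hX.abs_condExp_exp_sub_le hadapt hXpos hlam.le fun x hx => hdiv _ (hC x hx).1
  have hD₂ : ∀ n, ∀ᵐ ω ∂μ, |μ[Y (n + 1) ^ 2 - Y n ^ 2|𝒢 n] ω| ≤ C / γ := fun n => by
    simpa only [hY2] using hX.abs_condExp_exp_sub_le hadapt hXpos (by positivity)
      (fun x hx => hdiv _ (hC x hx).2) n
  calc _ ≤ (C / γ + 2 * (C / γ)) * ∫ ω, ((σ' ω : ℝ) - σ ω) ∂μ :=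
        integral_sq_stopped_sub_le (fun n => ((hadapt n).const_mul _).exp)
          (fun n ω => abs_exp_neg_mul_le_one hlam.le (hXpos n ω)) hD₁ hD₂ hσ hσ' hle hbdd
    _ = 3 * (C / γ) * ∫ ω, ((σ' ω : ℝ) - (σ ω : ℝ)) ∂μ := by ring
end
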